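/- arXiv:1608.05278 — 7 statements merged into one kernel-verified Lean document; each statement's English description precedes it below -/
import Mathlib

section
/- Let n ≥ 1 be a natural number, λ ∈ ℂ, μ ≥ 0 real, and set s = √(((n-1)/2)² + μ²), α = n/2 - iλ, β = -(n-1)/4 + s/2, a = 1/2 - iλ, b = 1/2 - iλ + s, c = 1 - 2iλ. If v : (0,1) → ℂ is twice continuously differentiable and u(σ) = σ^α (1-σ)^β v(σ) (complex powers of the positive reals σ, 1-σ), then for every σ ∈ (0,1): -σ²(1-σ)u''(σ) - ((1-n) - ((3-n)/2)σ)·σ·u'(σ) + (σ²μ²/(4(1-σ)))·u(σ) - (λ² + n²/4)·u(σ) = -σ^{α+1}(1-σ)^β · [ σ(1-σ)v''(σ) + (c - (a+b+1)σ)·v'(σ) - a·b·v(σ) ]. In particular, u solves the radial equation with right-hand side g if and only if v solves the inhomogeneous hypergeometric equation σ(1-σ)v'' + (c - (a+b+1)σ)v' - ab·v = -g·σ^{-α-1}(1-σ)^{-β}. -/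
/-!
Write `u = w v` with `w = σ^α (1-σ)^β`. Since `w' = ℓ w` with `ℓ = α/σ - β/(1-σ)`, we get
`u' = w (v' + ℓ v)` and `u'' = w (v'' + 2ℓ v' + (ℓ' + ℓ²) v)`. Substituted into the radial
operator, the terms of order `σ⁻¹` and `(1-σ)⁻¹` in the coefficient of `v` cancel exactly because
`α` and `β` are the indicial roots, `(α - n/2)² + λ² = 0` and `4β² + 2(n-1)β = μ²`; what is left is
`-σ w` times the hypergeometric operator with `a = α - (n-1)/2`, `b = α + 2β`, `c = 2α + 1 - n`.
-/

open Complex Filter Set Topology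

section LogDeriv

variable {𝕜 𝔸 : Type*} [NontriviallyNormedField 𝕜] [NormedCommRing 𝔸] [NormedAlgebra 𝕜 𝔸]
  {w ℓ v : 𝕜 → 𝔸} {x : 𝕜}

theorem deriv_mul_of_hasDerivAt_mul_self (hw : HasDerivAt w (ℓ x * w x) x)
    (hv : DifferentiableAt 𝕜 v x) :
    deriv (fun y => w y * v y) x = w x * (deriv v x + ℓ x * v x) := by
  rw [(hw.fun_mul hv.hasDerivAt).deriv]
  ring

theorem deriv_deriv_mul_of_hasDerivAt_mul_self {ℓ' : 𝔸}
    (hw : ∀ᶠ y in 𝓝 x, HasDerivAt w (ℓ y * w y) y) (hℓ : HasDerivAt ℓ ℓ' x)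
    (hv : ∀ᶠ y in 𝓝 x, DifferentiableAt 𝕜 v y) (hv' : DifferentiableAt 𝕜 (deriv v) x) :
    deriv (deriv fun y => w y * v y) x
      = w x * (deriv (deriv v) x + 2 * ℓ x * deriv v x + (ℓ' + ℓ x ^ 2) * v x) := by
  have h : deriv (fun y => w y * v y) =ᶠ[𝓝 x] fun y => w y * (deriv v y + ℓ y * v y) :=
    (hw.and hv).mono fun y hy => deriv_mul_of_hasDerivAt_mul_self hy.1 hy.2
  rw [h.deriv_eq, (hw.self_of_nhds.fun_mul
    (hv'.hasDerivAt.fun_add (hℓ.fun_mul hv.self_of_nhds.hasDerivAt))).deriv]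
  ring

end LogDeriv

theorem hasDerivAt_ofReal_cpow_const_of_pos {x : ℝ} (hx : 0 < x) (r : ℂ) :
    HasDerivAt (fun y : ℝ => (y : ℂ) ^ r) (r / x * (x : ℂ) ^ r) x := by
  refine (hasStrictDerivAt_cpow_const (ofReal_mem_slitPlane.2 hx)).hasDerivAt.comp_ofReal
    |>.congr_deriv ?_
  rw [cpow_sub _ _ (ofReal_ne_zero.2 hx.ne'), cpow_one]
  ring

noncomputable def indicialWeight (α β : ℂ) (t : ℝ) : ℂ :=
  (t : ℂ) ^ α * ((1 - t : ℝ) : ℂ) ^ β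

noncomputable def indicialLogDeriv (α β : ℂ) (t : ℝ) : ℂ :=
  α / t - β / (1 - t)

theorem hasDerivAt_indicialWeight (α β : ℂ) {t : ℝ} (ht : t ∈ Ioo (0 : ℝ) 1) :
    HasDerivAt (indicialWeight α β) (indicialLogDeriv α β t * indicialWeight α β t) t := by
  have h1 := (hasDerivAt_ofReal_cpow_const_of_pos (sub_pos.2 ht.2) β).scomp t
    ((hasDerivAt_id t).const_sub 1)
  refine ((hasDerivAt_ofReal_cpow_const_of_pos ht.1 α).fun_mul h1).congr_deriv ?_
  simp only [indicialWeight, indicialLogDeriv, Function.comp_apply, ofReal_sub, ofReal_one,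
    real_smul, ofReal_neg]
  ring

theorem hasDerivAt_indicialLogDeriv (α β : ℂ) {t : ℝ} (ht : t ∈ Ioo (0 : ℝ) 1) :
    HasDerivAt (indicialLogDeriv α β) (-α / (t : ℂ) ^ 2 - β / (1 - (t : ℂ)) ^ 2) t := by
  have h0 : (t : ℂ) ≠ 0 := ofReal_ne_zero.2 ht.1.ne'
  have h1 : (1 : ℂ) - t ≠ 0 := sub_ne_zero.2 (mod_cast ht.2.ne')
  have h := (((hasDerivAt_id (t : ℂ)).inv h0).const_mul α).sub
    ((((hasDerivAt_id (t : ℂ)).const_sub 1).inv h1).const_mul β)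
  refine h.comp_ofReal.congr_deriv ?_
  simp only [id]
  ring

noncomputable def radialOperator (n lam μ : ℂ) (u : ℝ → ℂ) (σ : ℝ) : ℂ :=
  -((σ : ℂ) ^ 2 * (1 - (σ : ℂ))) * deriv (deriv u) σ
    - ((1 - n) - ((3 - n) / 2) * (σ : ℂ)) * (σ : ℂ) * deriv u σ
    + ((σ : ℂ) ^ 2 * μ ^ 2 / (4 * (1 - (σ : ℂ)))) * u σ
    - (lam ^ 2 + n ^ 2 / 4) * u σ

noncomputable def hypergeometricOperator (a b c : ℂ) (v : ℝ → ℂ) (σ : ℝ) : ℂ :=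
  (σ : ℂ) * (1 - (σ : ℂ)) * deriv (deriv v) σ + (c - (a + b + 1) * (σ : ℂ)) * deriv v σ
    - a * b * v σ

theorem radial_conjugate_coeff_eq {n lam μ α β a b c x v₀ v₁ v₂ : ℂ} (hx : x ≠ 0)
    (hx' : 1 - x ≠ 0)
    (hα : (α - n / 2) ^ 2 + lam ^ 2 = 0) (hβ : 4 * β ^ 2 + 2 * (n - 1) * β = μ ^ 2)
    (ha : a = α - (n - 1) / 2) (hb : b = α + 2 * β) (hc : c = 2 * α + 1 - n) :
    -(x ^ 2 * (1 - x)) * (v₂ + 2 * (α / x - β / (1 - x)) * v₁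
        + ((-α / x ^ 2 - β / (1 - x) ^ 2) + (α / x - β / (1 - x)) ^ 2) * v₀)
      - ((1 - n) - ((3 - n) / 2) * x) * x * (v₁ + (α / x - β / (1 - x)) * v₀)
      + (x ^ 2 * μ ^ 2 / (4 * (1 - x))) * v₀ - (lam ^ 2 + n ^ 2 / 4) * v₀
    = -x * (x * (1 - x) * v₂ + (c - (a + b + 1) * x) * v₁ - a * b * v₀) := by
  rw [← hβ, eq_neg_of_add_eq_zero_right hα, ha, hb, hc]
  field_simp
  ring

theorem radialOperator_indicialWeight_mul {n lam μ α β a b c : ℂ}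
    (hα : (α - n / 2) ^ 2 + lam ^ 2 = 0) (hβ : 4 * β ^ 2 + 2 * (n - 1) * β = μ ^ 2)
    (ha : a = α - (n - 1) / 2) (hb : b = α + 2 * β) (hc : c = 2 * α + 1 - n)
    {v : ℝ → ℂ} (hv : ContDiffOn ℝ 2 v (Ioo 0 1)) {σ : ℝ} (hσ : σ ∈ Ioo (0 : ℝ) 1) :
    radialOperator n lam μ (fun t => indicialWeight α β t * v t) σ
      = -(σ : ℂ) ^ (α + 1) * ((1 - σ : ℝ) : ℂ) ^ β * hypergeometricOperator a b c v σ := by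
  have hσ_nhds : Ioo (0 : ℝ) 1 ∈ 𝓝 σ := isOpen_Ioo.mem_nhds hσ
  have hw : ∀ᶠ y in 𝓝 σ,
      HasDerivAt (indicialWeight α β) (indicialLogDeriv α β y * indicialWeight α β y) y :=
    eventually_of_mem hσ_nhds fun y hy => hasDerivAt_indicialWeight α β hy
  have hv₁ : ∀ᶠ y in 𝓝 σ, DifferentiableAt ℝ v y :=
    eventually_of_mem hσ_nhds fun y hy =>
      (hv.differentiableOn two_ne_zero).differentiableAt (isOpen_Ioo.mem_nhds hy)
  have hv₂ : DifferentiableAt ℝ (deriv v) σ :=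
    ((hv.deriv_of_isOpen isOpen_Ioo (by norm_num)).differentiableOn one_ne_zero).differentiableAt
      hσ_nhds
  have hx : (σ : ℂ) ≠ 0 := ofReal_ne_zero.2 hσ.1.ne'
  have hx' : (1 : ℂ) - σ ≠ 0 := sub_ne_zero.2 (mod_cast hσ.2.ne')
  rw [radialOperator, hypergeometricOperator,
    deriv_deriv_mul_of_hasDerivAt_mul_self hw (hasDerivAt_indicialLogDeriv α β hσ) hv₁ hv₂,
    deriv_mul_of_hasDerivAt_mul_self hw.self_of_nhds hv₁.self_of_nhds,
    cpow_add _ _ hx, cpow_one]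
  simp only [indicialWeight, indicialLogDeriv]
  linear_combination ((σ : ℂ) ^ α * ((1 - σ : ℝ) : ℂ) ^ β) *
    radial_conjugate_coeff_eq (v₀ := v σ) (v₁ := deriv v σ) (v₂ := deriv (deriv v) σ)
      hx hx' hα hβ ha hb hc

theorem eq_iff_eq_neg_mul_inv_mul_inv {K : Type*} [Field K] {L g H p q : K} (hp : p ≠ 0)
    (hq : q ≠ 0) (h : L = -p * q * H) : L = g ↔ H = -g * p⁻¹ * q⁻¹ := by
  rw [h]
  constructor
  · rintro rfl; field_simp
  · rintro rfl; field_simp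

theorem radial_operator_indicial_reduction_general (n : ℕ) (lam : ℂ)
    (μ : ℝ)
    (s : ℝ) (hs : s = Real.sqrt ((((n : ℝ) - 1) / 2) ^ 2 + μ ^ 2))
    (α β a b c : ℂ)
    (hα : α = (n : ℂ) / 2 - Complex.I * lam)
    (hβ : β = -((n : ℂ) - 1) / 4 + (s : ℂ) / 2)
    (ha : a = 1 / 2 - Complex.I * lam)
    (hb : b = 1 / 2 - Complex.I * lam + (s : ℂ))
    (hc : c = 1 - 2 * Complex.I * lam)
    (v : ℝ → ℂ) (hv : ContDiffOn ℝ 2 v (Set.Ioo 0 1))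
    (u : ℝ → ℂ)
    (hu : ∀ σ : ℝ, u σ = (σ : ℂ) ^ α * ((1 - σ : ℝ) : ℂ) ^ β * v σ) :
    (∀ σ ∈ Set.Ioo (0 : ℝ) 1,
      -((σ : ℂ) ^ 2 * (1 - (σ : ℂ))) * deriv (deriv u) σ
          - ((1 - (n : ℂ)) - ((3 - (n : ℂ)) / 2) * (σ : ℂ)) * (σ : ℂ) * deriv u σ
          + ((σ : ℂ) ^ 2 * (μ : ℂ) ^ 2 / (4 * (1 - (σ : ℂ)))) * u σ
          - (lam ^ 2 + (n : ℂ) ^ 2 / 4) * u σ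
        = -(σ : ℂ) ^ (α + 1) * ((1 - σ : ℝ) : ℂ) ^ β *
            ((σ : ℂ) * (1 - (σ : ℂ)) * deriv (deriv v) σ
              + (c - (a + b + 1) * (σ : ℂ)) * deriv v σ - a * b * v σ)) ∧
    (∀ g : ℝ → ℂ, ∀ σ ∈ Set.Ioo (0 : ℝ) 1,
      (-((σ : ℂ) ^ 2 * (1 - (σ : ℂ))) * deriv (deriv u) σ
          - ((1 - (n : ℂ)) - ((3 - (n : ℂ)) / 2) * (σ : ℂ)) * (σ : ℂ) * deriv u σ
          + ((σ : ℂ) ^ 2 * (μ : ℂ) ^ 2 / (4 * (1 - (σ : ℂ)))) * u σ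
          - (lam ^ 2 + (n : ℂ) ^ 2 / 4) * u σ = g σ)
        ↔ ((σ : ℂ) * (1 - (σ : ℂ)) * deriv (deriv v) σ
            + (c - (a + b + 1) * (σ : ℂ)) * deriv v σ - a * b * v σ
          = -g σ * (σ : ℂ) ^ (-α - 1) * ((1 - σ : ℝ) : ℂ) ^ (-β))) := by
  obtain rfl : u = fun t => indicialWeight α β t * v t := funext hu
  have hroot₀ : (α - n / 2) ^ 2 + lam ^ 2 = 0 := by
    rw [hα]; linear_combination lam ^ 2 * I_sq
  have hs_sq : (s : ℂ) ^ 2 = (((n : ℂ) - 1) / 2) ^ 2 + (μ : ℂ) ^ 2 := by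
    exact_mod_cast (hs ▸ Real.sq_sqrt (by positivity) : s ^ 2 = (((n : ℝ) - 1) / 2) ^ 2 + μ ^ 2)
  have hroot₁ : 4 * β ^ 2 + 2 * ((n : ℂ) - 1) * β = (μ : ℂ) ^ 2 := by
    rw [hβ]; linear_combination hs_sq
  have ha' : a = α - ((n : ℂ) - 1) / 2 := by rw [ha, hα]; ring
  have hb' : b = α + 2 * β := by rw [hb, hα, hβ]; ring
  have hc' : c = 2 * α + 1 - n := by rw [hc, hα]; ring
  have key : ∀ σ ∈ Ioo (0 : ℝ) 1,
      radialOperator n lam μ (fun t => indicialWeight α β t * v t) σ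
        = -(σ : ℂ) ^ (α + 1) * ((1 - σ : ℝ) : ℂ) ^ β * hypergeometricOperator a b c v σ :=
    fun σ hσ => radialOperator_indicialWeight_mul hroot₀ hroot₁ ha' hb' hc' hv hσ
  refine ⟨key, fun g σ hσ => ?_⟩
  rw [← neg_add', cpow_neg, cpow_neg]
  exact eq_iff_eq_neg_mul_inv_mul_inv (cpow_ne_zero_iff.2 (Or.inl (ofReal_ne_zero.2 hσ.1.ne')))
    (cpow_ne_zero_iff.2 (Or.inl (ofReal_ne_zero.2 (sub_pos.2 hσ.2).ne'))) (key σ hσ)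

/-- Factoring out the indicial roots: with `α = n/2 - iλ`, `β = -(n-1)/4 + s/2`,
`a = 1/2 - iλ`, `b = 1/2 - iλ + s`, `c = 1 - 2iλ`, and
`u(σ) = σ^α (1-σ)^β v(σ)`, the radial operator applied to `u` equals
`-σ^{α+1}(1-σ)^β` times the hypergeometric operator applied to `v`.
In particular `u` solves the radial equation with right-hand side `g` iff `v`
solves `σ(1-σ)v'' + (c-(a+b+1)σ)v' - ab v = -g σ^{-α-1}(1-σ)^{-β}`. -/
theorem radial_operator_indicial_reduction (n : ℕ) (hn : 1 ≤ n) (lam : ℂ)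
    (μ : ℝ) (hμ : 0 ≤ μ)
    (s : ℝ) (hs : s = Real.sqrt ((((n : ℝ) - 1) / 2) ^ 2 + μ ^ 2))
    (α β a b c : ℂ)
    (hα : α = (n : ℂ) / 2 - Complex.I * lam)
    (hβ : β = -((n : ℂ) - 1) / 4 + (s : ℂ) / 2)
    (ha : a = 1 / 2 - Complex.I * lam)
    (hb : b = 1 / 2 - Complex.I * lam + (s : ℂ))
    (hc : c = 1 - 2 * Complex.I * lam)
    (v : ℝ → ℂ) (hv : ContDiffOn ℝ 2 v (Set.Ioo 0 1))
    (u : ℝ → ℂ)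
    (hu : ∀ σ : ℝ, u σ = (σ : ℂ) ^ α * ((1 - σ : ℝ) : ℂ) ^ β * v σ) :
    (∀ σ ∈ Set.Ioo (0 : ℝ) 1,
      -((σ : ℂ) ^ 2 * (1 - (σ : ℂ))) * deriv (deriv u) σ
          - ((1 - (n : ℂ)) - ((3 - (n : ℂ)) / 2) * (σ : ℂ)) * (σ : ℂ) * deriv u σ
          + ((σ : ℂ) ^ 2 * (μ : ℂ) ^ 2 / (4 * (1 - (σ : ℂ)))) * u σ
          - (lam ^ 2 + (n : ℂ) ^ 2 / 4) * u σ
        = -(σ : ℂ) ^ (α + 1) * ((1 - σ : ℝ) : ℂ) ^ β *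
            ((σ : ℂ) * (1 - (σ : ℂ)) * deriv (deriv v) σ
              + (c - (a + b + 1) * (σ : ℂ)) * deriv v σ - a * b * v σ)) ∧
    (∀ g : ℝ → ℂ, ∀ σ ∈ Set.Ioo (0 : ℝ) 1,
      (-((σ : ℂ) ^ 2 * (1 - (σ : ℂ))) * deriv (deriv u) σ
          - ((1 - (n : ℂ)) - ((3 - (n : ℂ)) / 2) * (σ : ℂ)) * (σ : ℂ) * deriv u σ
          + ((σ : ℂ) ^ 2 * (μ : ℂ) ^ 2 / (4 * (1 - (σ : ℂ)))) * u σ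
          - (lam ^ 2 + (n : ℂ) ^ 2 / 4) * u σ = g σ)
        ↔ ((σ : ℂ) * (1 - (σ : ℂ)) * deriv (deriv v) σ
            + (c - (a + b + 1) * (σ : ℂ)) * deriv v σ - a * b * v σ
          = -g σ * (σ : ℂ) ^ (-α - 1) * ((1 - σ : ℝ) : ℂ) ^ (-β))) :=
  radial_operator_indicial_reduction_general n lam μ s hs α β a b c hα hβ ha hb hc v hv u hu
end

section
/- Let s ∈ 1/2 + ℕ (i.e., s = p + 1/2 for some p ∈ ℕ), let k ∈ ℕ, and set λ₀ = -i(1/2 + k + s). For λ ∈ ℂ write a(λ) = 1/2 - iλ, b(λ) = 1/2 - iλ + s, c(λ) = 1 - 2iλ. Fix z ∈ ℂ with |z| < 1. Then the function Φ(λ) = ∑_{m=0}^∞ Γ(a(λ)+m)Γ(b(λ)+m)/(Γ(c(λ)+m)·m!) · z^m, defined for λ in a punctured neighborhood of λ₀ on which no factor Γ(a+m), Γ(b+m) has a pole, extends to a function holomorphic in a neighborhood of λ₀. (The apparent pole of Γ(b) at b(λ₀) = -k is removable, so eigenvalues μ² with √(((n-1)/2)² + μ²) ∈ 1/2 + ℤ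 contribute no resonances.) -/
/-!
In the variable `a = 1/2 - iλ` one has `b = a + p + 1/2` and `c = 2a`, and `λ₀` corresponds to
`a₀ = -(k + p + 1/2)`. Near `a₀` every `Γ(a + m)` is holomorphic, since `a + m` stays close to a
half-integer, and for `m > 2k + 2p + 1` so is `Γ(b + m) / Γ(c + m)`, because `1/Γ` is entire.
For the remaining `m`, Euler's reflection formula and
`sin (π (2a + m)) = (-1)^p 2 sin (πa) sin (π (a + p + 1/2 + m))` give
`Γ(b + m) / Γ(c + m) = (-1)^p 2 sin (πa) Γ(1 - c - m) / Γ(1 - b - m)`,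
whose right side is holomorphic near `a₀`: the simultaneous poles of `Γ(b + m)` and `Γ(c + m)`
cancel. The ratio of consecutive terms is `(a + m)(b + m) z / ((c + m)(m + 1))`, which tends to `z`
uniformly near `a₀`, so the series of these holomorphic terms converges locally uniformly.
-/

open Complex Filter
open Metric Topology
open scoped Real

theorem differentiableOn_tsum_of_norm_succ_le {F : ℕ → ℂ → ℂ} {U : Set ℂ} (hU : IsOpen U)
    (hF : ∀ m, DifferentiableOn ℂ (F m) U) {r : ℝ} (hr₀ : 0 ≤ r) (hr₁ : r < 1) {N : ℕ}
    (hratio : ∀ m ≥ N, ∀ w ∈ U, ‖F (m + 1) w‖ ≤ r * ‖F m w‖) :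
    DifferentiableOn ℂ (fun w => ∑' m, F m w) U := by
  intro w hw
  obtain ⟨ε, hε, hball⟩ := Metric.isOpen_iff.mp hU w hw
  have hBU : closedBall w (ε / 2) ⊆ U :=
    (closedBall_subset_ball (half_lt_self hε)).trans hball
  have hbU : ball w (ε / 2) ⊆ U := ball_subset_closedBall.trans hBU
  obtain ⟨K, hK⟩ := (isCompact_closedBall w (ε / 2)).exists_bound_of_continuousOn
    ((hF N).continuousOn.mono hBU)
  have htail : ∀ j, ∀ v ∈ ball w (ε / 2), ‖F (j + N) v‖ ≤ K * r ^ j := fun j v hv => by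
    have := le_geom (u := fun i => ‖F (i + N) v‖) hr₀ j fun i _ => by
      simpa only [add_right_comm i 1 N] using hratio (i + N) (Nat.le_add_left N i) v (hbU hv)
    calc ‖F (j + N) v‖ ≤ r ^ j * ‖F (0 + N) v‖ := this
      _ ≤ K * r ^ j := by
        rw [zero_add, mul_comm]
        exact mul_le_mul_of_nonneg_right (hK v (ball_subset_closedBall hv)) (pow_nonneg hr₀ j)
  have hgeom : Summable fun j => K * r ^ j := (summable_geometric_of_lt_one hr₀ hr₁).mul_left K
  have hsplit : ∀ v ∈ ball w (ε / 2),
      ∑ m ∈ Finset.range N, F m v + ∑' j, F (j + N) v = ∑' m, F m v := fun v hv =>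
    ((summable_nat_add_iff N).mp (hgeom.of_norm_bounded (htail · v hv))).sum_add_tsum_nat_add N
  have hdiff : DifferentiableOn ℂ (fun v => ∑ m ∈ Finset.range N, F m v + ∑' j, F (j + N) v)
      (ball w (ε / 2)) :=
    (DifferentiableOn.fun_sum fun m _ => (hF m).mono hbU).add
      (differentiableOn_tsum_of_summable_norm hgeom (fun j => (hF (j + N)).mono hbU)
        isOpen_ball htail)
  have hw' : ball w (ε / 2) ∈ 𝓝 w := ball_mem_nhds w (half_pos hε)
  exact ((hdiff.differentiableAt hw').congr_of_eventuallyEq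
    (eventually_of_mem hw' fun v hv => (hsplit v hv).symm)).differentiableWithinAt

noncomputable def gammaHypergeomTerm (a b c z : ℂ) (m : ℕ) : ℂ :=
  Gamma (a + m) * Gamma (b + m) / (Gamma (c + m) * (Nat.factorial m : ℂ)) * z ^ m

theorem gammaHypergeomTerm_succ {a b c : ℂ} (z : ℂ) {m : ℕ} (ha : a + m ≠ 0) (hb : b + m ≠ 0)
    (hc : c + m ≠ 0) :
    gammaHypergeomTerm a b c z (m + 1) =
      (a + m) * (b + m) / ((c + m) * (m + 1)) * z * gammaHypergeomTerm a b c z m := by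
  simp only [gammaHypergeomTerm, Nat.cast_succ, ← add_assoc, Gamma_add_one _ ha,
    Gamma_add_one _ hb, Gamma_add_one _ hc, Nat.factorial_succ, Nat.cast_mul, pow_succ,
    div_eq_mul_inv, mul_inv]
  ring

theorem norm_add_natCast_le {a : ℂ} {R : ℝ} (ha : ‖a‖ ≤ R) (m : ℕ) : ‖a + m‖ ≤ m + R := by
  have := norm_add_le a m
  rw [norm_natCast] at this
  linarith

theorem sub_le_norm_add_natCast {a : ℂ} {R : ℝ} (ha : ‖a‖ ≤ R) (m : ℕ) : m - R ≤ ‖a + m‖ := by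
  have := norm_sub_norm_le (m : ℂ) (-a)
  rw [norm_natCast, norm_neg, sub_neg_eq_add, add_comm] at this
  linarith

theorem eventually_norm_mul_div_le {R r : ℝ} {z : ℂ} (hz : ‖z‖ < r) :
    ∀ᶠ m : ℕ in atTop, ∀ a b c : ℂ, ‖a‖ ≤ R → ‖b‖ ≤ R → ‖c‖ ≤ R →
      ‖(a + m) * (b + m) / ((c + m) * (m + 1)) * z‖ ≤ r := by
  have hsub : Tendsto (fun m : ℕ => (m : ℝ) - R) atTop atTop :=
    tendsto_atTop_add_const_right _ _ tendsto_natCast_atTop_atTop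
  set q : ℕ → ℝ := fun m => 1 + 2 * R / (m - R)
  have hq : Tendsto (fun m => q m ^ 2 * ‖z‖) atTop (𝓝 ‖z‖) := by
    simpa using
      (((tendsto_const_nhds (x := 2 * R)).div_atTop hsub).const_add 1).pow 2 |>.mul_const ‖z‖
  filter_upwards [hq.eventually_lt_const hz, hsub.eventually_gt_atTop 0]
    with m hm hmR a b c ha hb hc
  have hR : 0 ≤ R := (norm_nonneg a).trans ha
  have hqm : (m : ℝ) + R = q m * (m - R) := by simp only [q]; field_simp; ring
  have hm1 : ‖((m : ℂ) + 1)‖ = m + 1 := by exact_mod_cast norm_natCast (m + 1)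
  rw [norm_mul, norm_div, norm_mul, norm_mul, hm1]
  calc ‖a + m‖ * ‖b + m‖ / (‖c + m‖ * (m + 1)) * ‖z‖
      ≤ (m + R) * (m + R) / ((m - R) * (m - R)) * ‖z‖ := by
        gcongr
        · exact norm_add_natCast_le ha m
        · exact norm_add_natCast_le hb m
        · exact sub_le_norm_add_natCast hc m
        · linarith
    _ = q m ^ 2 * ‖z‖ := by rw [hqm]; field_simp
    _ ≤ r := hm.le

theorem eventually_norm_gammaHypergeomTerm_succ_le {R r : ℝ} {z : ℂ} (hz : ‖z‖ < r) :
    ∀ᶠ m : ℕ in atTop, ∀ a b c : ℂ, ‖a‖ ≤ R → ‖b‖ ≤ R → ‖c‖ ≤ R →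
      ‖gammaHypergeomTerm a b c z (m + 1)‖ ≤ r * ‖gammaHypergeomTerm a b c z m‖ := by
  filter_upwards [eventually_norm_mul_div_le hz,
    tendsto_natCast_atTop_atTop.eventually_gt_atTop R] with m hm hmR a b c ha hb hc
  have hne {x : ℂ} (hx : ‖x‖ ≤ R) : x + m ≠ 0 :=
    norm_pos_iff.mp ((sub_pos.mpr hmR).trans_le (sub_le_norm_add_natCast hx m))
  rw [gammaHypergeomTerm_succ z (hne ha) (hne hb) (hne hc), norm_mul]
  exact mul_le_mul_of_nonneg_right (hm a b c ha hb hc) (norm_nonneg _)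

theorem ne_neg_natCast_of_mem_integerComplement {x : ℂ} (hx : x ∈ integerComplement) (m : ℕ) :
    x ≠ -m :=
  fun h => hx ⟨-m, by simp [h]⟩

theorem ne_neg_natCast_of_re_pos {x : ℂ} (hx : 0 < x.re) (m : ℕ) : x ≠ -m := by
  rintro rfl
  simp only [neg_re, natCast_re, Left.neg_pos_iff] at hx
  linarith [(Nat.cast_nonneg m : (0 : ℝ) ≤ m)]

theorem one_sub_mem_integerComplement {x : ℂ} (hx : x ∈ integerComplement) :
    1 - x ∈ integerComplement := by
  rintro ⟨n, hn⟩
  exact hx ⟨1 - n, by push_cast; linear_combination -hn⟩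

theorem Gamma_div_Gamma_eq_of_mem_integerComplement {B C : ℂ} (hB : B ∈ integerComplement)
    (hC : C ∈ integerComplement) :
    Gamma B / Gamma C = sin (π * C) / sin (π * B) * Gamma (1 - C) * (Gamma (1 - B))⁻¹ := by
  have hΓ1B := Gamma_ne_zero
    (ne_neg_natCast_of_mem_integerComplement (one_sub_mem_integerComplement hB))
  have hΓC := Gamma_ne_zero (ne_neg_natCast_of_mem_integerComplement hC)
  have hsB := sin_pi_mul_ne_zero hB
  have hsC := sin_pi_mul_ne_zero hC
  have eB := Gamma_mul_Gamma_one_sub B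
  have eC := Gamma_mul_Gamma_one_sub C
  rw [eq_div_iff hsB] at eB
  rw [eq_div_iff hsC] at eC
  field_simp
  linear_combination eB - eC

theorem sin_pi_mul_two_mul_add_natCast (a : ℂ) (p m : ℕ) :
    sin (π * (2 * a + m)) = (-1) ^ p * 2 * sin (π * a) * sin (π * (a + (p + 1 / 2) + m)) := by
  have h2 : sin (π * (2 * a + m)) = (-1) ^ m * (2 * sin (π * a) * cos (π * a)) := by
    rw [← sin_two_mul, ← sin_antiperiodic.add_nat_mul_eq]; ring_nf
  have h1 : sin (π * (a + (p + 1 / 2) + m)) = (-1) ^ (p + m) * cos (π * a) := by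
    rw [← sin_add_pi_div_two, ← sin_antiperiodic.add_nat_mul_eq]; push_cast; ring_nf
  have hp : ((-1 : ℂ) ^ p) ^ 2 = 1 := by rw [← pow_mul, mul_comm, pow_mul]; norm_num
  rw [h1, h2, pow_add]
  linear_combination (-(-1) ^ m * 2 * sin (π * a) * cos (π * a)) * hp

theorem Gamma_add_half_div_Gamma_two_mul {a : ℂ} {p m : ℕ}
    (hB : a + (p + 1 / 2) + m ∈ integerComplement) (hC : 2 * a + m ∈ integerComplement) :
    Gamma (a + (p + 1 / 2) + m) / Gamma (2 * a + m) =
      (-1) ^ p * 2 * sin (π * a) * Gamma (1 - (2 * a + m))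
        * (Gamma (1 - (a + (p + 1 / 2) + m)))⁻¹ := by
  rw [Gamma_div_Gamma_eq_of_mem_integerComplement hB hC, sin_pi_mul_two_mul_add_natCast a p m,
    mul_div_cancel_right₀ _ (sin_pi_mul_ne_zero hB)]

theorem mem_integerComplement_of_norm_sub_intCast_lt_one {x : ℂ} {n : ℤ} (h : ‖x - n‖ < 1)
    (hx : x ≠ n) : x ∈ integerComplement := by
  rintro ⟨j, rfl⟩
  have hj : ‖((j - n : ℤ) : ℂ)‖ < 1 := by push_cast; exact h
  rw [norm_intCast, ← Int.cast_abs, ← Int.cast_one, Int.cast_lt, Int.abs_lt_one_iff,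
    sub_eq_zero] at hj
  exact hx (by rw [hj])

theorem mem_integerComplement_of_norm_sub_add_half_lt {x : ℂ} {n : ℤ}
    (h : ‖x - (n + 1 / 2)‖ < 1 / 2) : x ∈ integerComplement := by
  rintro ⟨j, rfl⟩
  have hj : (j : ℂ) - (n + 1 / 2) = (((j - n : ℤ) : ℝ) - 1 / 2 : ℝ) := by push_cast; ring
  rw [hj, norm_real, Real.norm_eq_abs, abs_lt] at h
  have h0 : (0 : ℤ) < j - n := by exact_mod_cast (by linarith : (0 : ℝ) < ((j - n : ℤ) : ℝ))
  have h1 : j - n < 1 := by exact_mod_cast (by linarith : ((j - n : ℤ) : ℝ) < 1)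
  omega

theorem re_pos_of_norm_sub_lt_re {x y : ℂ} (h : ‖x - y‖ < y.re) : 0 < x.re := by
  have := re_le_norm (y - x)
  rw [sub_re, norm_sub_rev] at this
  linarith

noncomputable def regularizedTerm (p k : ℕ) (z : ℂ) (m : ℕ) (a : ℂ) : ℂ :=
  if m ≤ 2 * k + 2 * p + 1 then
    Gamma (a + m) * ((-1) ^ p * 2 * sin (π * a) * Gamma (1 - (2 * a + m))
      * (Gamma (1 - (a + (p + 1 / 2) + m)))⁻¹) / (Nat.factorial m : ℂ) * z ^ m
  else gammaHypergeomTerm a (a + (p + 1 / 2)) (2 * a) z m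

section NearPole

variable {p k : ℕ} {a : ℂ}

theorem add_natCast_mem_integerComplement_of_near (ha : ‖a + (k + p + 1 / 2)‖ < 1 / 2)
    (m : ℕ) : a + m ∈ integerComplement :=
  mem_integerComplement_of_norm_sub_add_half_lt (n := m - k - p - 1) <| by
    convert ha using 2; push_cast; ring

theorem add_half_add_natCast_mem_integerComplement_of_near
    (ha : ‖a + (k + p + 1 / 2)‖ < 1 / 2) (hne : a ≠ -(k + p + 1 / 2)) (m : ℕ) :
    a + (p + 1 / 2) + m ∈ integerComplement := by
  refine mem_integerComplement_of_norm_sub_intCast_lt_one (n := m - k) ?_ fun h => hne ?_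
  · have : a + (p + 1 / 2) + m - ((m - k : ℤ) : ℂ) = a + (k + p + 1 / 2) := by push_cast; ring
    rw [this]
    linarith
  · push_cast at h; linear_combination h

theorem two_mul_add_natCast_mem_integerComplement_of_near
    (ha : ‖a + (k + p + 1 / 2)‖ < 1 / 2) (hne : a ≠ -(k + p + 1 / 2)) (m : ℕ) :
    2 * a + m ∈ integerComplement := by
  refine mem_integerComplement_of_norm_sub_intCast_lt_one (n := m - 2 * k - 2 * p - 1) ?_
    fun h => hne ?_
  · have : 2 * a + m - ((m - 2 * k - 2 * p - 1 : ℤ) : ℂ) = 2 * (a + (k + p + 1 / 2)) := by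
      push_cast; ring
    rw [this, norm_mul, Complex.norm_two]
    linarith
  · push_cast at h; linear_combination h / 2

theorem re_one_sub_two_mul_add_natCast_pos_of_near (ha : ‖a + (k + p + 1 / 2)‖ < 1 / 2)
    {m : ℕ} (hm : m ≤ 2 * k + 2 * p + 1) : 0 < (1 - (2 * a + m)).re := by
  refine re_pos_of_norm_sub_lt_re (y := 2 * k + 2 * p + 2 - m) ?_
  have : 1 - (2 * a + m) - (2 * k + 2 * p + 2 - m) = -2 * (a + (k + p + 1 / 2)) := by ring
  have hm' : (m : ℝ) ≤ 2 * k + 2 * p + 1 := by exact_mod_cast hm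
  rw [this, norm_mul, norm_neg, Complex.norm_two]
  simp only [sub_re, add_re, mul_re, natCast_re, natCast_im, re_ofNat, im_ofNat]
  linarith

theorem re_add_half_add_natCast_pos_of_near (ha : ‖a + (k + p + 1 / 2)‖ < 1 / 2)
    {m : ℕ} (hm : k < m) : 0 < (a + (p + 1 / 2) + m).re := by
  refine re_pos_of_norm_sub_lt_re (y := m - k) ?_
  have : a + (p + 1 / 2) + m - (m - k) = a + (k + p + 1 / 2) := by ring
  have hm' : (k : ℝ) + 1 ≤ m := by exact_mod_cast hm
  rw [this]
  simp only [sub_re, natCast_re]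
  linarith

theorem norm_le_of_near (ha : ‖a + (k + p + 1 / 2)‖ < 1 / 2) : ‖a‖ ≤ k + p + 1 := by
  have h : ‖((k + p + 1 / 2 : ℝ) : ℂ)‖ = k + p + 1 / 2 := Complex.norm_of_nonneg (by positivity)
  push_cast at h
  calc ‖a‖ = ‖a + (k + p + 1 / 2) - (k + p + 1 / 2)‖ := by rw [add_sub_cancel_right]
    _ ≤ ‖a + (k + p + 1 / 2)‖ + ‖(k + p + 1 / 2 : ℂ)‖ := norm_sub_le _ _
    _ ≤ k + p + 1 := by rw [h]; linarith

theorem regularizedTerm_eq_of_near (z : ℂ) (m : ℕ) (ha : ‖a + (k + p + 1 / 2)‖ < 1 / 2)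
    (hne : a ≠ -(k + p + 1 / 2)) :
    regularizedTerm p k z m a = gammaHypergeomTerm a (a + (p + 1 / 2)) (2 * a) z m := by
  rw [regularizedTerm, ite_eq_right_iff]
  intro _
  rw [← Gamma_add_half_div_Gamma_two_mul
    (add_half_add_natCast_mem_integerComplement_of_near ha hne m)
    (two_mul_add_natCast_mem_integerComplement_of_near ha hne m), gammaHypergeomTerm]
  ring

theorem differentiableOn_regularizedTerm (z : ℂ) (m : ℕ) :
    DifferentiableOn ℂ (regularizedTerm p k z m) (ball (-(k + p + 1 / 2)) (1 / 2)) := by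
  intro a ha
  rw [mem_ball, dist_eq, sub_neg_eq_add] at ha
  have hΓa : DifferentiableAt ℂ (fun w => Gamma (w + m)) a :=
    (differentiableAt_Gamma _ (ne_neg_natCast_of_mem_integerComplement
      (add_natCast_mem_integerComplement_of_near ha m))).comp a (by fun_prop)
  have hΓinv {f : ℂ → ℂ} (hf : Differentiable ℂ f) :
      DifferentiableAt ℂ (fun w => (Gamma (f w))⁻¹) a :=
    (differentiable_one_div_Gamma.comp hf).differentiableAt
  refine DifferentiableAt.differentiableWithinAt ?_
  unfold regularizedTerm
  split_ifs with hm
  · have hΓc : DifferentiableAt ℂ (fun w => Gamma (1 - (2 * w + m))) a :=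
      (differentiableAt_Gamma _ (ne_neg_natCast_of_re_pos
        (re_one_sub_two_mul_add_natCast_pos_of_near ha hm))).comp a (by fun_prop)
    have hsin : DifferentiableAt ℂ (fun w => sin (π * w)) a := by fun_prop
    exact ((hΓa.mul (((hsin.const_mul _).mul hΓc).mul (hΓinv (by fun_prop)))).div_const _
      ).mul_const _
  · have hΓb : DifferentiableAt ℂ (fun w => Gamma (w + (p + 1 / 2) + m)) a :=
      (differentiableAt_Gamma _ (ne_neg_natCast_of_re_pos
        (re_add_half_add_natCast_pos_of_near ha (by omega)))).comp a (by fun_prop)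
    simp only [gammaHypergeomTerm, div_eq_mul_inv, mul_inv]
    exact ((hΓa.mul hΓb).mul ((hΓinv (by fun_prop)).mul_const _)).mul_const _

theorem differentiableOn_tsum_regularizedTerm {z : ℂ} (hz : ‖z‖ < 1) :
    DifferentiableOn ℂ (fun a => ∑' m, regularizedTerm p k z m a)
      (ball (-(k + p + 1 / 2)) (1 / 2)) := by
  obtain ⟨r, hzr, hr⟩ := exists_between hz
  obtain ⟨N, hN⟩ := eventually_atTop.mp
    ((eventually_norm_gammaHypergeomTerm_succ_le (R := 2 * k + 2 * p + 2) hzr).and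
      (eventually_gt_atTop (2 * k + 2 * p + 1)))
  refine differentiableOn_tsum_of_norm_succ_le isOpen_ball (differentiableOn_regularizedTerm z)
    ((norm_nonneg z).trans hzr.le) hr (N := N) fun m hm a ha => ?_
  rw [mem_ball, dist_eq, sub_neg_eq_add] at ha
  have haR := norm_le_of_near ha
  have hp : ‖((p + 1 / 2 : ℝ) : ℂ)‖ = p + 1 / 2 := Complex.norm_of_nonneg (by positivity)
  push_cast at hp
  obtain ⟨hratio, hmM⟩ := hN m hm
  simp only [regularizedTerm, if_neg (by omega : ¬ m + 1 ≤ 2 * k + 2 * p + 1),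
    if_neg (by omega : ¬ m ≤ 2 * k + 2 * p + 1)]
  refine hratio _ _ _ (by linarith) ((norm_add_le _ _).trans ?_) ?_
  · rw [hp]; linarith
  · rw [norm_mul, Complex.norm_two]; linarith

end NearPole

/-- Removable singularity: for `s ∈ 1/2 + ℕ`, `k ∈ ℕ`, `λ₀ = -i(1/2+k+s)` and
`|z| < 1`, the function
`Φ(λ) = ∑_m Γ(a(λ)+m)Γ(b(λ)+m)/(Γ(c(λ)+m) m!) zᵐ`, with `a = 1/2-iλ`,
`b = 1/2-iλ+s`, `c = 1-2iλ`, defined on a punctured neighborhood of `λ₀` where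
no factor `Γ(a+m)`, `Γ(b+m)` has a pole, extends holomorphically across `λ₀`. -/
theorem no_resonance_half_integer (s : ℝ) (p : ℕ) (hsp : s = (p : ℝ) + 1 / 2)
    (k : ℕ) (lam₀ : ℂ) (hlam₀ : lam₀ = -Complex.I * (1 / 2 + (k : ℂ) + (s : ℂ)))
    (z : ℂ) (hz : ‖z‖ < 1) :
    ∃ (U : Set ℂ) (Ψ : ℂ → ℂ), IsOpen U ∧ lam₀ ∈ U ∧ DifferentiableOn ℂ Ψ U ∧
      ∀ lam ∈ U, lam ≠ lam₀ →
        (¬ ∃ j : ℕ, (1 / 2 - Complex.I * lam : ℂ) = -(j : ℂ)) →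
        (¬ ∃ j : ℕ, (1 / 2 - Complex.I * lam + (s : ℂ)) = -(j : ℂ)) →
        Ψ lam = ∑' m : ℕ,
          Complex.Gamma ((1 / 2 - Complex.I * lam) + (m : ℂ))
            * Complex.Gamma ((1 / 2 - Complex.I * lam + (s : ℂ)) + (m : ℂ))
            / (Complex.Gamma ((1 - 2 * Complex.I * lam) + (m : ℂ))
                * (Nat.factorial m : ℂ)) * z ^ m := by
  have hs : (s : ℂ) = p + 1 / 2 := by rw [hsp]; push_cast; ring
  have ha₀ : 1 / 2 - I * lam₀ = -(k + p + 1 / 2) := by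
    rw [hlam₀, hs]; linear_combination (1 + k + p : ℂ) * I_mul_I
  refine ⟨(fun lam => 1 / 2 - I * lam) ⁻¹' ball (-(k + p + 1 / 2)) (1 / 2),
    fun lam => ∑' m, regularizedTerm p k z m (1 / 2 - I * lam),
    isOpen_ball.preimage (by fun_prop),
    by simpa only [Set.mem_preimage, ha₀] using mem_ball_self one_half_pos,
    (differentiableOn_tsum_regularizedTerm hz).comp (by fun_prop) (Set.mapsTo_preimage _ _), ?_⟩
  intro lam hlam hne _ _
  rw [Set.mem_preimage, mem_ball, dist_eq, sub_neg_eq_add] at hlam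
  have ha : 1 / 2 - I * lam ≠ -(k + p + 1 / 2) := by
    rw [← ha₀]
    exact fun h => hne (mul_left_cancel₀ I_ne_zero (by linear_combination -h))
  refine tsum_congr fun m => ?_
  rw [regularizedTerm_eq_of_near z m hlam ha, ← hs, gammaHypergeomTerm,
    show 2 * (1 / 2 - I * lam) = 1 - 2 * I * lam by ring]
end

section
/- Let s ≥ 0 be real and let λ₀ ∈ ℂ satisfy b(λ₀) = 1/2 - iλ₀ + s ∉ {0,-1,-2,...}, where for λ ∈ ℂ we write a(λ) = 1/2 - iλ, b(λ) = 1/2 - iλ + s, c(λ) = 1 - 2iλ. Fix z ∈ ℂ with |z| < 1. Then the function Φ(λ) = ∑_{m=0}^∞ Γ(a(λ)+m)Γ(b(λ)+m)/(Γ(c(λ)+m)·m!) · z^m, defined for λ in a punctured neighborhood of λ₀ on which no factor Γ(a+m), Γ(b+m) has a pole, extends to a function holomorphic in a neighborhood of λ₀. (In particular, any poles of Γ(a(λ)) at a(λ₀) ∈ ℤ₋ are cancelled, since then c(λ₀) = 2a(λ₀) ≤ a(λ₀) and 1/Γ(c+m) vanishes wherever Γ(a+m) has a pole.) -/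
/-!
Because `c = 2a`, the `λ`-dependence of the `m`-th term through `a` is `Γ(a + m) / Γ(2a + m)`.
Writing `Γ(2a + 2m) = (2a + m)ₘ Γ(2a + m)` and using Legendre's duplication formula
`Γ(w) / Γ(2w) = 2^(1 - 2w) √π / Γ(w + 1/2)` at `w = a + m`, this quotient equals the entire
function `2^(1 - 2(a + m)) √π (2a + m)ₘ / Γ(a + m + 1/2)`. After this regularization the terms are
holomorphic wherever `b ∉ ℤ₋`, and the ratio of consecutive terms
`(a + m)(b + m) z / ((2a + m)(m + 1))` tends to `z` locally uniformly, so the series converges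
locally uniformly and its sum is holomorphic.
-/

open Complex Filter Metric Topology
open scoped Real Nat

lemma isOpen_setOf_forall_ne_neg_natCast : IsOpen {w : ℂ | ∀ n : ℕ, w ≠ -n} := by
  have hclosed : IsClosed (Set.range fun n : ℕ => -(n : ℂ)) := by
    refine isClosed_of_pairwise_le_dist one_pos ?_
    rintro _ ⟨m, rfl⟩ _ ⟨n, rfl⟩ hmn
    rw [dist_neg_neg, ← ofReal_natCast, ← ofReal_natCast, isometry_ofReal.dist_eq,
      Nat.dist_cast_real]
    exact Nat.pairwise_one_le_dist fun h => hmn (by rw [h])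
  convert hclosed.isOpen_compl
  ext; simp [eq_comm]

lemma forall_add_natCast_ne_neg_natCast {w : ℂ} (hw : ∀ n : ℕ, w ≠ -n) (m : ℕ) :
    ∀ n : ℕ, w + m ≠ -n := by
  intro n h
  exact hw (n + m) (by push_cast; linear_combination h)

lemma add_natCast_ne_neg_natCast {w : ℂ} {m : ℕ} (hw : ‖w‖ < m) (n : ℕ) : w + m ≠ -n := by
  intro h
  have : ‖w‖ = m + n := by
    rw [show w = -((m + n : ℕ) : ℂ) by push_cast; linear_combination h, norm_neg,
      norm_natCast, Nat.cast_add]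
  linarith [(n.cast_nonneg : (0 : ℝ) ≤ n)]

lemma exists_summable_bound_of_eventually_norm_succ_le {X E : Type*} [TopologicalSpace X]
    [SeminormedAddCommGroup E] {K : Set X} (hK : IsCompact K) {F : ℕ → X → E}
    (hF : ∀ m, ContinuousOn (F m) K) {r : ℝ} (hr : r < 1)
    (hratio : ∀ᶠ m in atTop, ∀ x ∈ K, ‖F (m + 1) x‖ ≤ r * ‖F m x‖) :
    ∃ u : ℕ → ℝ, Summable u ∧ ∀ m, ∀ x ∈ K, ‖F m x‖ ≤ u m := by
  set u : ℕ → ℝ := fun m => sSup ((‖F m ·‖) '' K)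
  have hle : ∀ m, ∀ x ∈ K, ‖F m x‖ ≤ u m := fun m x hx =>
    le_csSup (hK.bddAbove_image (hF m).norm) ⟨x, hx, rfl⟩
  have hu0 : ∀ m, 0 ≤ u m := fun m =>
    Real.sSup_nonneg (by rintro _ ⟨x, -, rfl⟩; exact norm_nonneg _)
  refine ⟨u, summable_of_ratio_norm_eventually_le (max_lt hr one_pos) ?_, hle⟩
  filter_upwards [hratio] with m hm
  rw [Real.norm_of_nonneg (hu0 _), Real.norm_of_nonneg (hu0 _)]
  refine Real.sSup_le ?_ (mul_nonneg (le_max_right _ _) (hu0 m))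
  rintro _ ⟨x, hx, rfl⟩
  calc ‖F (m + 1) x‖ ≤ r * ‖F m x‖ := hm x hx
    _ ≤ max r 0 * u m := mul_le_mul (le_max_left _ _) (hle m x hx) (norm_nonneg _)
        (le_max_right _ _)

theorem differentiableOn_tsum_of_eventually_norm_succ_le {E : Type*} [NormedAddCommGroup E]
    [NormedSpace ℂ E] [CompleteSpace E] {U : Set ℂ} (hU : IsOpen U) {F : ℕ → ℂ → E}
    (hF : ∀ m, DifferentiableOn ℂ (F m) U)
    (hratio : ∀ K ⊆ U, IsCompact K →
      ∃ r < 1, ∀ᶠ m in atTop, ∀ x ∈ K, ‖F (m + 1) x‖ ≤ r * ‖F m x‖) :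
    DifferentiableOn ℂ (fun x => ∑' m, F m x) U := by
  intro x hx
  obtain ⟨ε, hε, hball⟩ := nhds_basis_closedBall.mem_iff.1 (hU.mem_nhds hx)
  obtain ⟨r, hr, hr_le⟩ := hratio _ hball (isCompact_closedBall x ε)
  obtain ⟨u, hu, hle⟩ := exists_summable_bound_of_eventually_norm_succ_le
    (isCompact_closedBall x ε) (fun m => (hF m).continuousOn.mono hball) hr hr_le
  have hdiff := differentiableOn_tsum_of_summable_norm hu
    (fun m => (hF m).mono (ball_subset_closedBall.trans hball)) isOpen_ball
    (fun m y hy => hle m y (ball_subset_closedBall hy))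
  exact (hdiff.differentiableAt (ball_mem_nhds x hε)).differentiableWithinAt

lemma norm_hypergeometric_ratio_le {a b z : ℂ} {A : ℝ} {m : ℕ} (ha : ‖a‖ ≤ A) (hb : ‖b‖ ≤ A)
    (hm : 2 * A < m) :
    ‖(a + m) * (b + m) / ((2 * a + m) * (m + 1)) * z‖
      ≤ (m + A) ^ 2 / ((m - 2 * A) * (m + 1)) * ‖z‖ := by
  have hnum : ∀ w : ℂ, ‖w‖ ≤ A → ‖w + m‖ ≤ m + A := fun w hw => by
    have := norm_add_le w m
    rw [norm_natCast] at this
    linarith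
  have hden : (m : ℝ) - 2 * A ≤ ‖2 * a + m‖ := by
    have := norm_sub_norm_le (m : ℂ) (-(2 * a))
    rw [norm_natCast, norm_neg, norm_mul, Complex.norm_two, sub_neg_eq_add, add_comm] at this
    linarith
  have hsucc : ‖(m : ℂ) + 1‖ = m + 1 := by exact_mod_cast Complex.norm_natCast (m + 1)
  have ha' := hnum a ha
  have hb' := hnum b hb
  have hmA : 0 ≤ (m : ℝ) + A := (norm_nonneg _).trans ha'
  have hm2A : 0 < (m : ℝ) - 2 * A := by linarith
  rw [norm_mul, norm_div, norm_mul, norm_mul, hsucc, sq]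
  gcongr

lemma eventually_norm_hypergeometric_ratio_le {z : ℂ} {r : ℝ} (hz : ‖z‖ < r) (A : ℝ) :
    ∀ᶠ m : ℕ in atTop, 2 * A < m ∧ ∀ a b : ℂ, ‖a‖ ≤ A → ‖b‖ ≤ A →
      ‖(a + m) * (b + m) / ((2 * a + m) * (m + 1)) * z‖ ≤ r := by
  have h0 := tendsto_const_div_atTop_nhds_zero_nat (𝕜 := ℝ)
  have hlim : Tendsto (fun m : ℕ => (1 + A / m) ^ 2 / ((1 - 2 * A / m) * (1 + 1 / m)) * ‖z‖)
      atTop (𝓝 ‖z‖) := by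
    simpa using ((((tendsto_const_nhds (x := (1 : ℝ))).add (h0 A)).pow 2).div
      ((tendsto_const_nhds.sub (h0 (2 * A))).mul (tendsto_const_nhds.add (h0 1)))
      (by norm_num : ((1 : ℝ) - 0) * (1 + 0) ≠ 0)).mul_const ‖z‖
  filter_upwards [hlim.eventually_lt_const hz,
    tendsto_natCast_atTop_atTop.eventually_gt_atTop (2 * A),
    eventually_gt_atTop 0] with m hlt hm hm0
  refine ⟨hm, fun a b ha hb => (norm_hypergeometric_ratio_le ha hb hm).trans ?_⟩
  convert hlt.le using 2
  have : (m : ℝ) ≠ 0 := Nat.cast_ne_zero.2 hm0.ne'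
  field_simp

namespace Complex

-- `Gamma` is `0` at its poles, so this holds for every `x`.
lemma inv_Gamma_eq_ascPochhammer_mul_inv_Gamma_add_nat (x : ℂ) (n : ℕ) :
    (Gamma x)⁻¹ = (ascPochhammer ℂ n).eval x * (Gamma (x + n))⁻¹ := by
  induction n with
  | zero => simp
  | succ n ih =>
    rw [ih, one_div_Gamma_eq_self_mul_one_div_Gamma_add_one, ascPochhammer_succ_eval]
    push_cast
    ring_nf

lemma Gamma_mul_inv_Gamma_two_mul {s : ℂ} (hs : ∀ n : ℕ, s ≠ -n) :
    Gamma s * (Gamma (2 * s))⁻¹ = 2 ^ (1 - 2 * s) * √π * (Gamma (s + 1 / 2))⁻¹ := by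
  have hdup := Gamma_mul_Gamma_add_half s
  have hc : (2 : ℂ) ^ (1 - 2 * s) * √π ≠ 0 := by
    simp [cpow_eq_zero_iff, Real.sqrt_ne_zero'.2 Real.pi_pos]
  by_cases h : Gamma (s + 1 / 2) = 0
  · have h2 : Gamma (2 * s) = 0 := by
      rw [h, mul_zero, mul_assoc] at hdup
      exact (mul_eq_zero.1 hdup.symm).resolve_right hc
    rw [h, h2, inv_zero, mul_zero, mul_zero]
  · have h2 : Gamma (2 * s) ≠ 0 := by
      intro h2
      rw [h2, zero_mul, zero_mul] at hdup
      exact mul_ne_zero (Gamma_ne_zero hs) h hdup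
    rw [eq_mul_inv_iff_mul_eq₀ h, mul_right_comm, hdup]
    field_simp

end Complex

noncomputable def gammaRatio (m : ℕ) (w : ℂ) : ℂ :=
  2 ^ (1 - 2 * (w + m)) * √π * (ascPochhammer ℂ m).eval (2 * w + m) * (Gamma (w + m + 1 / 2))⁻¹

lemma differentiable_gammaRatio (m : ℕ) : Differentiable ℂ (gammaRatio m) := by
  unfold gammaRatio
  have hpow : Differentiable ℂ fun w : ℂ => (2 : ℂ) ^ (1 - 2 * (w + m)) :=
    (by fun_prop : Differentiable ℂ fun w : ℂ => 1 - 2 * (w + m)).const_cpow (Or.inl two_ne_zero)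
  have hpoch : Differentiable ℂ fun w : ℂ => (ascPochhammer ℂ m).eval (2 * w + m) :=
    (ascPochhammer ℂ m).differentiable.comp (by fun_prop)
  have hinv : Differentiable ℂ fun w : ℂ => (Gamma (w + m + 1 / 2))⁻¹ :=
    differentiable_one_div_Gamma.comp (by fun_prop)
  exact ((hpow.mul_const _).mul hpoch).mul hinv

lemma Gamma_div_Gamma_eq_gammaRatio {w : ℂ} {m : ℕ} (hw : ∀ n : ℕ, w + m ≠ -n) :
    Gamma (w + m) / Gamma (2 * w + m) = gammaRatio m w := by
  rw [div_eq_mul_inv, inv_Gamma_eq_ascPochhammer_mul_inv_Gamma_add_nat _ m,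
    show 2 * w + m + m = 2 * (w + m) by ring, mul_left_comm,
    Gamma_mul_inv_Gamma_two_mul hw, gammaRatio]
  ring

lemma gammaRatio_succ {w : ℂ} {m : ℕ} (hw : ∀ n : ℕ, w + m ≠ -n) (h2w : 2 * w + m ≠ 0) :
    gammaRatio (m + 1) w = gammaRatio m w * (w + m) / (2 * w + m) := by
  have hw' : ∀ n : ℕ, w + (m + 1 : ℕ) ≠ -n := fun n h =>
    hw (n + 1) (by push_cast at h ⊢; linear_combination h)
  rw [← Gamma_div_Gamma_eq_gammaRatio hw', ← Gamma_div_Gamma_eq_gammaRatio hw, Nat.cast_succ,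
    ← add_assoc, ← add_assoc, Gamma_add_one _ (by simpa using hw 0), Gamma_add_one _ h2w,
    mul_div_mul_comm]
  ring

noncomputable def hypergeometricTerm (z : ℂ) (m : ℕ) (a b : ℂ) : ℂ :=
  Gamma (b + m) * gammaRatio m a * z ^ m / m !

lemma Gamma_mul_Gamma_div_mul_eq_hypergeometricTerm {a : ℂ} (ha : ∀ n : ℕ, a ≠ -n)
    (b z : ℂ) (m : ℕ) :
    Gamma (a + m) * Gamma (b + m) / (Gamma (2 * a + m) * m !) * z ^ m
      = hypergeometricTerm z m a b := by
  rw [hypergeometricTerm,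
    ← Gamma_div_Gamma_eq_gammaRatio (forall_add_natCast_ne_neg_natCast ha m)]
  ring

lemma hypergeometricTerm_succ {a b z : ℂ} {m : ℕ} (ha : ∀ n : ℕ, a + m ≠ -n)
    (h2a : 2 * a + m ≠ 0) (hb : b + m ≠ 0) :
    hypergeometricTerm z (m + 1) a b
      = (a + m) * (b + m) / ((2 * a + m) * (m + 1)) * z * hypergeometricTerm z m a b := by
  rw [hypergeometricTerm, hypergeometricTerm, gammaRatio_succ ha h2a, Nat.cast_succ, ← add_assoc,
    Gamma_add_one _ hb, pow_succ, Nat.factorial_succ]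
  push_cast
  field_simp

lemma differentiableOn_hypergeometricTerm {α β : ℂ → ℂ} (hα : Differentiable ℂ α)
    (hβ : Differentiable ℂ β) (z : ℂ) (m : ℕ) {U : Set ℂ} (hβU : ∀ x ∈ U, ∀ n : ℕ, β x ≠ -n) :
    DifferentiableOn ℂ (fun x => hypergeometricTerm z m (α x) (β x)) U := by
  intro x hx
  have hΓ : DifferentiableAt ℂ (fun x => Gamma (β x + m)) x :=
    (differentiableAt_Gamma _ (forall_add_natCast_ne_neg_natCast (hβU x hx) m)).comp x
      (by fun_prop)
  exact ((hΓ.mul ((differentiable_gammaRatio m).differentiableAt.comp x (hα x))).mul_const _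
    |>.div_const _).differentiableWithinAt

theorem differentiableOn_tsum_hypergeometricTerm {α β : ℂ → ℂ} (hα : Differentiable ℂ α)
    (hβ : Differentiable ℂ β) {z : ℂ} (hz : ‖z‖ < 1) {U : Set ℂ} (hU : IsOpen U)
    (hβU : ∀ x ∈ U, ∀ n : ℕ, β x ≠ -n) :
    DifferentiableOn ℂ (fun x => ∑' m, hypergeometricTerm z m (α x) (β x)) U := by
  obtain ⟨r, hzr, hr⟩ := exists_between hz
  refine differentiableOn_tsum_of_eventually_norm_succ_le hU
    (fun m => differentiableOn_hypergeometricTerm hα hβ z m hβU) fun K hKU hK => ⟨r, hr, ?_⟩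
  obtain ⟨A, hA⟩ := hK.exists_bound_of_continuousOn
    (hα.continuous.prodMk hβ.continuous).continuousOn
  filter_upwards [eventually_norm_hypergeometric_ratio_le hzr A] with m ⟨hm, hratio⟩ x hx
  have hαA : ‖α x‖ ≤ A := (norm_fst_le _).trans (hA x hx)
  have hβA : ‖β x‖ ≤ A := (norm_snd_le _).trans (hA x hx)
  have hA0 : 0 ≤ A := (norm_nonneg _).trans hαA
  have h2α : ‖2 * α x‖ < m := by rw [norm_mul, Complex.norm_two]; linarith
  rw [hypergeometricTerm_succ (add_natCast_ne_neg_natCast (by linarith))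
    (by simpa using add_natCast_ne_neg_natCast h2α 0)
    (by simpa using add_natCast_ne_neg_natCast (show ‖β x‖ < m by linarith) 0), norm_mul]
  exact mul_le_mul_of_nonneg_right (hratio _ _ hαA hβA) (norm_nonneg _)

theorem no_resonance_b_not_nonpos_integer_general (s : ℝ) (lam₀ : ℂ)
    (hb₀ : ¬ ∃ j : ℕ, (1 / 2 - Complex.I * lam₀ + (s : ℂ)) = -(j : ℂ))
    (z : ℂ) (hz : ‖z‖ < 1) :
    ∃ (U : Set ℂ) (Ψ : ℂ → ℂ), IsOpen U ∧ lam₀ ∈ U ∧ DifferentiableOn ℂ Ψ U ∧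
      ∀ lam ∈ U, lam ≠ lam₀ →
        (¬ ∃ j : ℕ, (1 / 2 - Complex.I * lam : ℂ) = -(j : ℂ)) →
        (¬ ∃ j : ℕ, (1 / 2 - Complex.I * lam + (s : ℂ)) = -(j : ℂ)) →
        Ψ lam = ∑' m : ℕ,
          Complex.Gamma ((1 / 2 - Complex.I * lam) + (m : ℂ))
            * Complex.Gamma ((1 / 2 - Complex.I * lam + (s : ℂ)) + (m : ℂ))
            / (Complex.Gamma ((1 - 2 * Complex.I * lam) + (m : ℂ))
                * (Nat.factorial m : ℂ)) * z ^ m := by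
  push Not at hb₀
  have hU : IsOpen {lam : ℂ | ∀ n : ℕ, 1 / 2 - I * lam + s ≠ -n} :=
    isOpen_setOf_forall_ne_neg_natCast.preimage (by fun_prop)
  refine ⟨_, fun lam => ∑' m, hypergeometricTerm z m (1 / 2 - I * lam) (1 / 2 - I * lam + s),
    hU, hb₀, differentiableOn_tsum_hypergeometricTerm (by fun_prop) (by fun_prop) hz hU
      fun _ h => h, ?_⟩
  rintro lam - - ha -
  push Not at ha
  refine tsum_congr fun m => ?_
  rw [show 1 - 2 * I * lam = 2 * (1 / 2 - I * lam) by ring,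
    Gamma_mul_Gamma_div_mul_eq_hypergeometricTerm ha]

/-- No poles away from `b ∈ ℤ₋`: for `s ≥ 0` and `λ₀` with
`b(λ₀) = 1/2 - iλ₀ + s` not a nonpositive integer, the function
`Φ(λ) = ∑_m Γ(a(λ)+m)Γ(b(λ)+m)/(Γ(c(λ)+m) m!) zᵐ` (with `a = 1/2-iλ`,
`b = 1/2-iλ+s`, `c = 1-2iλ`, `|z| < 1`), defined on a punctured neighborhood
of `λ₀` where no factor `Γ(a+m)`, `Γ(b+m)` has a pole, extends holomorphically
across `λ₀`. -/
theorem no_resonance_b_not_nonpos_integer (s : ℝ) (hs : 0 ≤ s) (lam₀ : ℂ)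
    (hb₀ : ¬ ∃ j : ℕ, (1 / 2 - Complex.I * lam₀ + (s : ℂ)) = -(j : ℂ))
    (z : ℂ) (hz : ‖z‖ < 1) :
    ∃ (U : Set ℂ) (Ψ : ℂ → ℂ), IsOpen U ∧ lam₀ ∈ U ∧ DifferentiableOn ℂ Ψ U ∧
      ∀ lam ∈ U, lam ≠ lam₀ →
        (¬ ∃ j : ℕ, (1 / 2 - Complex.I * lam : ℂ) = -(j : ℂ)) →
        (¬ ∃ j : ℕ, (1 / 2 - Complex.I * lam + (s : ℂ)) = -(j : ℂ)) →
        Ψ lam = ∑' m : ℕ,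
          Complex.Gamma ((1 / 2 - Complex.I * lam) + (m : ℂ))
            * Complex.Gamma ((1 / 2 - Complex.I * lam + (s : ℂ)) + (m : ℂ))
            / (Complex.Gamma ((1 - 2 * Complex.I * lam) + (m : ℂ))
                * (Nat.factorial m : ℂ)) * z ^ m :=
  no_resonance_b_not_nonpos_integer_general s lam₀ hb₀ z hz
end

section
/- Let s > 0 be real with 2s ∉ ℤ, let k ∈ ℕ, and set λ₀ = -i(1/2 + k + s), so that a₀ = a(λ₀) = -k - s ∉ ℤ, b(λ₀) = -k, and c₀ = c(λ₀) = -2k - 2s ∉ ℤ, where a(λ) = 1/2 - iλ, b(λ) = 1/2 - iλ + s, c(λ) = 1 - 2iλ. Fix z ∈ ℂ with |z| < 1 and let Φ(λ) = Γ(a(λ))Γ(b(λ))/Γ(c(λ)) · F(a(λ),b(λ),c(λ);z), defined for λ near λ₀ with b(λ) ∉ ℤ₋. Then lim_{λ→λ₀} (λ - λ₀)·Φ(λ) exists and equals i·(-1)^k/k! · Γ(a₀)/Γ(c₀) · F(a₀, -k, c₀; z); moreover, as a function of z on the unit disc this limit is analytic and not identically zero (it equals i·(-1)^k/k! · Γ(a₀)/Γ(c₀)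 ≠ 0 at z = 0). Hence Φ has a genuine (non-removable) simple pole at λ₀. -/
/-!
Since `λ - λ₀ = i (b(λ) + k)`, the product `(λ - λ₀) Φ(λ)` equals
`i (b + k) Γ(b) · Γ(a) / Γ(c) · F(a, b, c; z)`. The first factor tends to `(-1)^k / k!`, the
residue of `Γ` at `-k`. The other factors are continuous at `(a₀, -k, c₀)` because
`a₀, c₀ ∉ ℤ₋`; for `F` this is dominated convergence, the terms of the series being bounded,
uniformly for parameters near `(a₀, -k, c₀)`, by a summable majorant when `|z| < 1`.
At `b = -k` the series terminates, so the limit is a polynomial in `z`, with constant term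
`i (-1)^k / k! · Γ(a₀) / Γ(c₀) ≠ 0`.
-/

open Complex Filter Finset Topology
open scoped Nat

/-- The Gauss hypergeometric function
`F(a,b,c;z) = ∑_{m≥0} (a)_m (b)_m / ((c)_m m!) zᵐ`. -/
noncomputable def hypergeomF (a b c z : ℂ) : ℂ :=
  ∑' m : ℕ, ((ascPochhammer ℂ m).eval a * (ascPochhammer ℂ m).eval b
    / ((ascPochhammer ℂ m).eval c * (Nat.factorial m : ℂ))) * z ^ m

lemma ascPochhammer_eval_eq_prod_range {R : Type*} [CommSemiring R] (n : ℕ) (r : R) :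
    (ascPochhammer R n).eval r = ∏ j ∈ range n, (r + j) := by
  induction n with
  | zero => simp
  | succ n ih => rw [ascPochhammer_succ_eval, ih, prod_range_succ]

lemma exists_pos_le_norm_add_natCast {c : ℂ} (hc : ∀ m : ℕ, c ≠ -m) :
    ∃ δ > 0, ∀ j : ℕ, δ ≤ ‖c + j‖ := by
  have hlim : Tendsto (fun j : ℕ => ‖c + j‖) cofinite atTop := by
    rw [Nat.cofinite_eq_atTop]
    refine tendsto_atTop_mono (fun j => ?_)
      (tendsto_atTop_add_const_left _ (-‖c‖) tendsto_natCast_atTop_atTop)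
    simpa [neg_add_eq_sub, add_comm c] using norm_sub_norm_le (j : ℂ) (-c)
  obtain ⟨j₀, hj₀⟩ := hlim.exists_forall_le
  exact ⟨_, norm_pos_iff.2 fun h => hc j₀ (eq_neg_of_add_eq_zero_left h), hj₀⟩

lemma tendsto_natCast_add_div_natCast_add (x y : ℝ) :
    Tendsto (fun m : ℕ => (m + x) / (m + y)) atTop (𝓝 1) := by
  have hx : Tendsto (fun m : ℕ => x / (m + y)) atTop (𝓝 0) :=
    tendsto_const_nhds.div_atTop (tendsto_atTop_add_const_right _ y tendsto_natCast_atTop_atTop)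
  simpa [add_div] using (tendsto_natCast_div_add_atTop y).add hx

noncomputable def hypergeomTerm (a b c z : ℂ) (m : ℕ) : ℂ :=
  (ascPochhammer ℂ m).eval a * (ascPochhammer ℂ m).eval b
    / ((ascPochhammer ℂ m).eval c * (m ! : ℂ)) * z ^ m

noncomputable def hypergeomMajorant (A B ε ρ : ℝ) (m : ℕ) : ℝ :=
  (∏ j ∈ range m, (A + j)) ^ 2 / ((∏ j ∈ range m, max ε (j - B)) * m !) * ρ ^ m

lemma hypergeomMajorant_succ {A B ε ρ : ℝ} (hε : 0 < ε) (m : ℕ) :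
    hypergeomMajorant A B ε ρ (m + 1) =
      hypergeomMajorant A B ε ρ m * ((A + m) ^ 2 * ρ / (max ε (m - B) * (m + 1))) := by
  have hmax : ∀ j : ℕ, max ε (j - B) ≠ 0 := fun j => (lt_max_of_lt_left hε).ne'
  simp only [hypergeomMajorant, prod_range_succ, Nat.factorial_succ, Nat.cast_mul]
  field_simp [hmax m]
  push_cast
  ring

lemma hypergeomMajorant_pos {A B ε ρ : ℝ} (hA : 0 < A) (hε : 0 < ε) (hρ : 0 < ρ) (m : ℕ) :
    0 < hypergeomMajorant A B ε ρ m := by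
  have hmax : ∀ j : ℕ, 0 < max ε (j - B) := fun j => lt_max_of_lt_left hε
  have := prod_pos fun j (_ : j ∈ range m) => hmax j
  unfold hypergeomMajorant
  positivity

lemma summable_hypergeomMajorant {A B ε ρ : ℝ} (hA : 0 < A) (hε : 0 < ε) (hρ₀ : 0 < ρ)
    (hρ₁ : ρ < 1) : Summable (hypergeomMajorant A B ε ρ) := by
  have hpos := hypergeomMajorant_pos (B := B) hA hε hρ₀
  refine summable_of_ratio_test_tendsto_lt_one hρ₁ (.of_forall fun m => (hpos m).ne') ?_
  have hratio := ((tendsto_natCast_add_div_natCast_add A 1).mul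
    (tendsto_natCast_add_div_natCast_add A (-B))).mul_const ρ
  rw [one_mul, one_mul] at hratio
  refine hratio.congr' ?_
  filter_upwards [tendsto_natCast_atTop_atTop.eventually_ge_atTop (B + ε)] with m hm
  have hmax : max ε (m - B) = m + -B := by rw [max_eq_right (by linarith)]; ring
  rw [Real.norm_of_nonneg (hpos _).le, Real.norm_of_nonneg (hpos _).le,
    hypergeomMajorant_succ hε, mul_div_cancel_left₀ _ (hpos m).ne', hmax]
  have : (m : ℝ) + -B ≠ 0 := by linarith
  field_simp
  ring

lemma norm_ascPochhammer_eval_le {x : ℂ} {A : ℝ} (hx : ‖x‖ ≤ A) (m : ℕ) :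
    ‖(ascPochhammer ℂ m).eval x‖ ≤ ∏ j ∈ range m, (A + j) := by
  rw [ascPochhammer_eval_eq_prod_range, norm_prod]
  refine prod_le_prod (fun _ _ => norm_nonneg _) fun j _ => ?_
  exact (norm_add_le _ _).trans (by rw [Complex.norm_natCast]; linarith)

lemma prod_le_norm_ascPochhammer_eval {x : ℂ} {L : ℕ → ℝ} (hL₀ : ∀ j, 0 ≤ L j)
    (hL : ∀ j : ℕ, L j ≤ ‖x + j‖) (m : ℕ) :
    ∏ j ∈ range m, L j ≤ ‖(ascPochhammer ℂ m).eval x‖ := by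
  rw [ascPochhammer_eval_eq_prod_range, norm_prod]
  exact prod_le_prod (fun j _ => hL₀ j) fun j _ => hL j

lemma max_le_norm_add_natCast {γ c : ℂ} {ε B : ℝ} (hc : ∀ j : ℕ, 2 * ε ≤ ‖c + j‖)
    (hγc : ‖γ - c‖ ≤ ε) (hγ : ‖γ‖ ≤ B) (j : ℕ) : max ε (j - B) ≤ ‖γ + j‖ := by
  refine max_le ?_ ?_
  · have := norm_sub_le (γ + j) (γ - c)
    rw [add_sub_sub_cancel, add_comm] at this
    linarith [hc j]
  · have := norm_sub_le (γ + j) γ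
    rw [add_sub_cancel_left, Complex.norm_natCast] at this
    linarith

lemma norm_hypergeomTerm_le {α β γ z : ℂ} {A B ε ρ : ℝ} (hε : 0 < ε) (hα : ‖α‖ ≤ A)
    (hβ : ‖β‖ ≤ A) (hγ : ∀ j : ℕ, max ε (j - B) ≤ ‖γ + j‖) (hz : ‖z‖ ≤ ρ) (m : ℕ) :
    ‖hypergeomTerm α β γ z m‖ ≤ hypergeomMajorant A B ε ρ m := by
  have hL : ∏ j ∈ range m, max ε (j - B) ≤ ‖(ascPochhammer ℂ m).eval γ‖ :=
    prod_le_norm_ascPochhammer_eval (fun j => le_max_of_le_left hε.le) hγ m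
  have hL₀ : 0 < ∏ j ∈ range m, max ε (j - B) :=
    prod_pos fun j _ => lt_max_of_lt_left hε
  rw [hypergeomTerm, hypergeomMajorant, norm_mul, norm_div, norm_mul, norm_mul, norm_pow,
    Complex.norm_natCast, sq]
  have hα' := norm_ascPochhammer_eval_le hα m
  have hβ' := norm_ascPochhammer_eval_le hβ m
  have hP : 0 ≤ ∏ j ∈ range m, (A + j) := (norm_nonneg _).trans hα'
  gcongr

lemma continuousAt_hypergeomTerm {a b c : ℂ} (hc : ∀ m : ℕ, c ≠ -m) (z : ℂ) (m : ℕ) :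
    ContinuousAt (fun p : ℂ × ℂ × ℂ => hypergeomTerm p.1 p.2.1 p.2.2 z m) (a, b, c) := by
  have hden : (ascPochhammer ℂ m).eval c * (m ! : ℂ) ≠ 0 := by
    refine mul_ne_zero ?_ (Nat.cast_ne_zero.2 m.factorial_ne_zero)
    rw [Ne, ascPochhammer_eval_eq_zero_iff]
    rintro ⟨j, -, hj⟩
    exact hc j (by rw [hj, neg_neg])
  unfold hypergeomTerm
  fun_prop (disch := exact hden)

theorem continuousAt_hypergeomF {a b c z : ℂ} (hc : ∀ m : ℕ, c ≠ -m) (hz : ‖z‖ < 1) :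
    ContinuousAt (fun p : ℂ × ℂ × ℂ => hypergeomF p.1 p.2.1 p.2.2 z) (a, b, c) := by
  obtain ⟨δ, hδ, hcδ⟩ := exists_pos_le_norm_add_natCast hc
  set A := ‖a‖ + ‖b‖ + 1 with hA
  set ρ := (‖z‖ + 1) / 2 with hρ
  have near (f : ℂ × ℂ × ℂ → ℝ) (r : ℝ) (hf : Continuous f) (h : f (a, b, c) < r) :
      ∀ᶠ p in 𝓝 (a, b, c), f p ≤ r :=
    (hf.tendsto _).eventually_le_const h
  refine tendsto_tsum_of_dominated_convergence (bound := hypergeomMajorant A (‖c‖ + 1) (δ / 2) ρ)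
    (summable_hypergeomMajorant (by positivity) (by positivity) (by positivity)
      (by linarith [norm_nonneg z])) (fun m => continuousAt_hypergeomTerm hc z m) ?_
  filter_upwards [near (‖·.1‖) A (by fun_prop) (by simp only [hA]; linarith [norm_nonneg b]),
    near (‖·.2.1‖) A (by fun_prop) (by simp only [hA]; linarith [norm_nonneg a]),
    near (‖·.2.2 - c‖) (δ / 2) (by fun_prop) (by simpa using hδ),
    near (‖·.2.2‖) (‖c‖ + 1) (by fun_prop) (by simp)] with p hα hβ hγc hγ m
  exact norm_hypergeomTerm_le (by positivity) hα hβ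
    (max_le_norm_add_natCast (fun j => by linarith [hcδ j]) hγc hγ) (by linarith) m

lemma hypergeomF_zero (a b c : ℂ) : hypergeomF a b c 0 = 1 := by
  rw [hypergeomF, tsum_eq_single 0 fun m hm => by simp [zero_pow hm]]
  simp

lemma hypergeomF_neg_nat (a c w : ℂ) (k : ℕ) :
    hypergeomF a (-k) c w = ∑ m ∈ range (k + 1), hypergeomTerm a (-k) c w m := by
  refine tsum_eq_sum fun m hm => ?_
  rw [ascPochhammer_eval_neg_coe_nat_of_lt (by simpa using hm)]
  simp

lemma differentiable_hypergeomF_neg_nat (a c : ℂ) (k : ℕ) :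
    Differentiable ℂ (hypergeomF a (-k) c) := by
  simp only [funext (hypergeomF_neg_nat a c · k), hypergeomTerm]
  fun_prop

lemma tendsto_add_natCast_mul_Gamma (k : ℕ) :
    Tendsto (fun w => (w + k) * Gamma w) (𝓝[≠] (-k : ℂ)) (𝓝 ((-1) ^ k / k !)) := by
  induction k with
  | zero => simpa using tendsto_self_mul_Gamma_nhds_zero
  | succ k ih =>
    have hp : (-(k + 1) : ℂ) ≠ 0 := neg_ne_zero.2 (Nat.cast_add_one_ne_zero k)
    have hshift : Tendsto (· + 1) (𝓝[≠] (-(k + 1) : ℂ)) (𝓝[≠] (-k : ℂ)) := by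
      refine tendsto_nhdsWithin_iff.2 ⟨?_, ?_⟩
      · exact ((continuous_add_const 1).tendsto' _ _ (by ring)).mono_left nhdsWithin_le_nhds
      · filter_upwards [self_mem_nhdsWithin] with w hw
        rw [Set.mem_compl_singleton_iff] at hw ⊢
        contrapose! hw
        linear_combination hw
    have hinv : Tendsto (·⁻¹) (𝓝[≠] (-(k + 1) : ℂ)) (𝓝 (-(k + 1) : ℂ)⁻¹) :=
      (continuousAt_inv₀ hp).tendsto.mono_left nhdsWithin_le_nhds
    have hlim := (ih.comp hshift).mul hinv
    rw [show ((-1) ^ k / k ! * (-(k + 1) : ℂ)⁻¹) = (-1) ^ (k + 1) / (k + 1)! by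
      push_cast [Nat.factorial_succ]; field_simp; ring] at hlim
    push_cast
    refine hlim.congr' ?_
    filter_upwards [(eventually_ne_nhds hp).filter_mono nhdsWithin_le_nhds] with w hw
    simp only [Function.comp_apply, Gamma_add_one w hw]
    field_simp
    ring

theorem tendsto_add_natCast_mul_Gamma_mul_hypergeomF {X : Type*} {l : Filter X}
    {α β γ : X → ℂ} {a c z : ℂ} {k : ℕ} (ha : ∀ m : ℕ, a ≠ -m) (hc : ∀ m : ℕ, c ≠ -m)
    (hz : ‖z‖ < 1) (hα : Tendsto α l (𝓝 a)) (hβ : Tendsto β l (𝓝[≠] (-k)))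
    (hγ : Tendsto γ l (𝓝 c)) :
    Tendsto (fun x => (β x + k) * Gamma (β x) * Gamma (α x) / Gamma (γ x)
        * hypergeomF (α x) (β x) (γ x) z) l
      (𝓝 ((-1) ^ k / k ! * Gamma a / Gamma c * hypergeomF a (-k) c z)) := by
  have hΓa := (differentiableAt_Gamma _ ha).continuousAt.tendsto.comp hα
  have hΓc := (differentiableAt_Gamma _ hc).continuousAt.tendsto.comp hγ
  have hF := (continuousAt_hypergeomF (a := a) (b := -k) hc hz).tendsto.comp
    (hα.prodMk_nhds ((tendsto_nhdsWithin_iff.1 hβ).1.prodMk_nhds hγ))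
  exact ((((tendsto_add_natCast_mul_Gamma k).comp hβ).mul hΓa).div hΓc
    (Gamma_ne_zero hc)).mul hF

theorem resonance_generic_s_general (s : ℝ) (hs2 : ∀ m : ℤ, 2 * s ≠ (m : ℝ))
    (k : ℕ) (lam₀ a₀ c₀ : ℂ)
    (hlam₀ : lam₀ = -Complex.I * (1 / 2 + (k : ℂ) + (s : ℂ)))
    (ha₀ : a₀ = -(k : ℂ) - (s : ℂ)) (hc₀ : c₀ = -2 * (k : ℂ) - 2 * (s : ℂ))
    (z : ℂ) (hz : ‖z‖ < 1)
    (Φ : ℂ → ℂ)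
    (hΦ : ∀ lam : ℂ, Φ lam =
      Complex.Gamma (1 / 2 - Complex.I * lam)
        * Complex.Gamma (1 / 2 - Complex.I * lam + (s : ℂ))
        / Complex.Gamma (1 - 2 * Complex.I * lam)
        * hypergeomF (1 / 2 - Complex.I * lam) (1 / 2 - Complex.I * lam + (s : ℂ))
            (1 - 2 * Complex.I * lam) z) :
    Tendsto (fun lam => (lam - lam₀) * Φ lam) (nhdsWithin lam₀ {lam₀}ᶜ)
        (nhds (Complex.I * (-1) ^ k / (Nat.factorial k : ℂ)
          * Complex.Gamma a₀ / Complex.Gamma c₀ * hypergeomF a₀ (-(k : ℂ)) c₀ z)) ∧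
    AnalyticOnNhd ℂ (fun w : ℂ => Complex.I * (-1) ^ k / (Nat.factorial k : ℂ)
        * Complex.Gamma a₀ / Complex.Gamma c₀ * hypergeomF a₀ (-(k : ℂ)) c₀ w)
        (Metric.ball 0 1) ∧
    Complex.I * (-1) ^ k / (Nat.factorial k : ℂ)
        * Complex.Gamma a₀ / Complex.Gamma c₀ * hypergeomF a₀ (-(k : ℂ)) c₀ 0
      = Complex.I * (-1) ^ k / (Nat.factorial k : ℂ)
        * Complex.Gamma a₀ / Complex.Gamma c₀ ∧
    Complex.I * (-1) ^ k / (Nat.factorial k : ℂ)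
        * Complex.Gamma a₀ / Complex.Gamma c₀ ≠ 0 := by
  have hc₀_ne : ∀ m : ℕ, c₀ ≠ -m := by
    intro m h
    have := congrArg re (hc₀ ▸ h)
    simp only [sub_re, neg_re, natCast_re, ofReal_re, mul_re] at this
    exact hs2 (m - 2 * k) (by push_cast; norm_num at this; linarith)
  have ha₀_ne : ∀ m : ℕ, a₀ ≠ -m := fun m h =>
    hc₀_ne (2 * m) (by push_cast; linear_combination hc₀ + 2 * h - 2 * ha₀)
  refine ⟨?_, fun w _ => ((differentiable_hypergeomF_neg_nat a₀ c₀ k).const_mul _).analyticAt w,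
    by rw [hypergeomF_zero, mul_one],
    by simp [Gamma_ne_zero ha₀_ne, Gamma_ne_zero hc₀_ne, Nat.factorial_ne_zero]⟩
  have hIlam₀ : I * lam₀ = 1 / 2 + k + s := by
    rw [hlam₀]; linear_combination -(1 / 2 + k + s : ℂ) * I_sq
  have hsub (lam : ℂ) : lam - lam₀ = I * (1 / 2 - I * lam + s + k) := by
    linear_combination (lam - lam₀) * I_sq + I * hIlam₀
  have hα : Tendsto (fun lam => 1 / 2 - I * lam) (𝓝[≠] lam₀) (𝓝 a₀) :=
    (Continuous.tendsto' (by fun_prop) _ _ (by rw [ha₀]; linear_combination -hIlam₀)).mono_left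
      nhdsWithin_le_nhds
  have hγ : Tendsto (fun lam => 1 - 2 * I * lam) (𝓝[≠] lam₀) (𝓝 c₀) :=
    (Continuous.tendsto' (by fun_prop) _ _ (by rw [hc₀]; linear_combination -2 * hIlam₀)).mono_left
      nhdsWithin_le_nhds
  have hβ : Tendsto (fun lam => 1 / 2 - I * lam + s) (𝓝[≠] lam₀) (𝓝[≠] (-k)) := by
    refine tendsto_nhdsWithin_iff.2 ⟨(Continuous.tendsto' (by fun_prop) _ _
      (by linear_combination -hIlam₀)).mono_left nhdsWithin_le_nhds, ?_⟩
    filter_upwards [self_mem_nhdsWithin] with lam hlam h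
    exact hlam (sub_eq_zero.1 (by rw [hsub, Set.mem_singleton_iff.1 h, neg_add_cancel, mul_zero]))
  rw [mul_div_assoc I, mul_assoc I, mul_div_assoc I, mul_assoc I]
  exact ((tendsto_add_natCast_mul_Gamma_mul_hypergeomF ha₀_ne hc₀_ne hz hα hβ hγ).const_mul I).congr
    fun lam => by rw [hΦ, hsub]; ring

/-- Genuine simple pole for non-half-integer, non-integer `s`: with `s > 0`,
`2s ∉ ℤ`, `k ∈ ℕ`, `λ₀ = -i(1/2+k+s)`, `a₀ = -k-s`, `c₀ = -2k-2s` and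
`Φ(λ) = Γ(a)Γ(b)/Γ(c) · F(a,b,c;z)`, the limit of `(λ-λ₀)Φ(λ)` as `λ → λ₀`
exists and equals `i(-1)^k/k! · Γ(a₀)/Γ(c₀) · F(a₀,-k,c₀;z)`; as a function of
`z` this limit is analytic on the unit disc and at `z = 0` it equals
`i(-1)^k/k! · Γ(a₀)/Γ(c₀) ≠ 0`.  Hence `Φ` has a non-removable simple pole. -/
theorem resonance_generic_s (s : ℝ) (hs : 0 < s) (hs2 : ∀ m : ℤ, 2 * s ≠ (m : ℝ))
    (k : ℕ) (lam₀ a₀ c₀ : ℂ)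
    (hlam₀ : lam₀ = -Complex.I * (1 / 2 + (k : ℂ) + (s : ℂ)))
    (ha₀ : a₀ = -(k : ℂ) - (s : ℂ)) (hc₀ : c₀ = -2 * (k : ℂ) - 2 * (s : ℂ))
    (z : ℂ) (hz : ‖z‖ < 1)
    (Φ : ℂ → ℂ)
    (hΦ : ∀ lam : ℂ, Φ lam =
      Complex.Gamma (1 / 2 - Complex.I * lam)
        * Complex.Gamma (1 / 2 - Complex.I * lam + (s : ℂ))
        / Complex.Gamma (1 - 2 * Complex.I * lam)
        * hypergeomF (1 / 2 - Complex.I * lam) (1 / 2 - Complex.I * lam + (s : ℂ))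
            (1 - 2 * Complex.I * lam) z) :
    Tendsto (fun lam => (lam - lam₀) * Φ lam) (nhdsWithin lam₀ {lam₀}ᶜ)
        (nhds (Complex.I * (-1) ^ k / (Nat.factorial k : ℂ)
          * Complex.Gamma a₀ / Complex.Gamma c₀ * hypergeomF a₀ (-(k : ℂ)) c₀ z)) ∧
    AnalyticOnNhd ℂ (fun w : ℂ => Complex.I * (-1) ^ k / (Nat.factorial k : ℂ)
        * Complex.Gamma a₀ / Complex.Gamma c₀ * hypergeomF a₀ (-(k : ℂ)) c₀ w)
        (Metric.ball 0 1) ∧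
    Complex.I * (-1) ^ k / (Nat.factorial k : ℂ)
        * Complex.Gamma a₀ / Complex.Gamma c₀ * hypergeomF a₀ (-(k : ℂ)) c₀ 0
      = Complex.I * (-1) ^ k / (Nat.factorial k : ℂ)
        * Complex.Gamma a₀ / Complex.Gamma c₀ ∧
    Complex.I * (-1) ^ k / (Nat.factorial k : ℂ)
        * Complex.Gamma a₀ / Complex.Gamma c₀ ≠ 0 :=
  resonance_generic_s_general s hs2 k lam₀ a₀ c₀ hlam₀ ha₀ hc₀ z hz Φ hΦ
end

section
/- Let s ∈ ℕ, let k ∈ ℕ, and set λ₀ = -i(1/2 + k + s), so that a(λ₀) = -k - s ∈ ℤ₋, b(λ₀) = -k ∈ ℤ₋, and c(λ₀) = -2k - 2s ∈ ℤ₋, where a(λ) = 1/2 - iλ, b(λ) = 1/2 - iλ + s, c(λ) = 1 - 2iλ. Fix z ∈ ℂ with |z| < 1 and let Φ(λ) = ∑_{m=0}^∞ Γ(a(λ)+m)Γ(b(λ)+m)/(Γ(c(λ)+m)·m!) · z^m, defined for λ in a punctured neighborhood of λ₀ on which no Gamma factor has a pole. Then lim_{λ→λ₀} (λ - λ₀)·Φ(λ)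 exists for every such z; as a function of z it is a polynomial of degree at most k whose value at z = 0 is nonzero. Hence Φ has a genuine (non-removable) simple pole at λ₀. -/
/-!
In the local coordinate `w = a + k + s` at the pole (so `λ - λ₀ = i w`), the `m`-th term of
`w Φ` is `w Γ(m-k-s+w) Γ(m-k+w) / (Γ(m-2k-2s+2w) m!) zᵐ`. For `m ≤ k` two simple poles of `Γ`
in the numerator meet one in the denominator, so the term tends to a nonzero multiple of `zᵐ`.
For `m > k` at most one pole is left, and it is cancelled either by the factor `w` or by the zero
of `1/Γ` in the denominator, so the term tends to `0`. The ratio of consecutive terms tends to `z`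
uniformly for `w` near `0`, so the tail is dominated by a geometric series and the limit passes
through the sum (Tannery's theorem).
-/

open Complex Filter Topology
open scoped Nat

theorem tendsto_tsum_of_norm_succ_le {α G : Type*} [NormedAddCommGroup G] [CompleteSpace G]
    {l : Filter α} {f : α → ℕ → G} {g : ℕ → G} {r : ℝ} (hr : r < 1)
    (hf : ∀ m, Tendsto (f · m) l (𝓝 (g m)))
    (hratio : ∀ᶠ p in l ×ˢ atTop, ‖f p.1 (p.2 + 1)‖ ≤ r * ‖f p.1 p.2‖) :
    Tendsto (fun x ↦ ∑' m, f x m) l (𝓝 (∑' m, g m)) := by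
  obtain ⟨P, hP, Q, hQ, hPQ⟩ := eventually_prod_iff.mp hratio
  obtain ⟨N, hN⟩ := eventually_atTop.mp hQ
  obtain ⟨c, hc₀, hrc, hc₁⟩ : ∃ c, 0 ≤ c ∧ r ≤ c ∧ c < 1 :=
    ⟨max r 0, le_max_right _ _, le_max_left _ _, max_lt hr one_pos⟩
  let bound : ℕ → ℝ := fun m ↦ if m < N then ‖g m‖ + 1 else (‖g N‖ + 1) * c ^ (m - N)
  refine tendsto_tsum_of_dominated_convergence (bound := bound) ?_ hf ?_
  · rw [← summable_nat_add_iff N]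
    exact ((summable_geometric_of_lt_one hc₀ hc₁).mul_left (‖g N‖ + 1)).congr fun j ↦ by
      simp [bound]
  have hnear : ∀ᶠ x in l, ∀ m ∈ Finset.range (N + 1), ‖f x m‖ ≤ ‖g m‖ + 1 :=
    (eventually_all_finset _).2 fun m _ ↦ (hf m).norm.eventually_le_const (lt_add_one _)
  filter_upwards [hP, hnear] with x hx hnear m
  by_cases hm : m < N
  · simpa [bound, hm] using hnear m (by simp; omega)
  obtain ⟨j, rfl⟩ := Nat.exists_eq_add_of_le (not_lt.mp hm)
  have hgeom : ‖f x (N + j)‖ ≤ c ^ j * ‖f x N‖ :=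
    le_geom (u := fun i ↦ ‖f x (N + i)‖) hc₀ j fun i _ ↦
      (hPQ hx (hN (N + i) le_self_add)).trans (by gcongr)
  simp only [bound, hm, if_false, Nat.add_sub_cancel_left]
  calc ‖f x (N + j)‖ ≤ c ^ j * ‖f x N‖ := hgeom
    _ ≤ c ^ j * (‖g N‖ + 1) := by gcongr; exact hnear N (by simp)
    _ = (‖g N‖ + 1) * c ^ j := mul_comm _ _

theorem tendsto_add_natCast_div_add_natCast {α : Type*} {l : Filter α} {u v : α → ℂ}
    {u₀ v₀ : ℂ} (hu : Tendsto u l (𝓝 u₀)) (hv : Tendsto v l (𝓝 v₀)) :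
    Tendsto (fun p : α × ℕ ↦ (u p.1 + p.2) / (v p.1 + p.2)) (l ×ˢ atTop) (𝓝 1) := by
  have hinv : Tendsto (fun p : α × ℕ ↦ ((p.2 : ℂ))⁻¹) (l ×ˢ atTop) (𝓝 0) :=
    tendsto_inv_atTop_nhds_zero_nat.comp tendsto_snd
  have hU := ((hu.comp tendsto_fst).mul hinv).const_add 1
  have hV := ((hv.comp tendsto_fst).mul hinv).const_add 1
  rw [mul_zero, add_zero] at hU hV
  refine (div_one (1 : ℂ) ▸ hU.div hV one_ne_zero).congr' ?_
  filter_upwards [tendsto_snd.eventually (eventually_ne_atTop 0)] with p hp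
  have hp' : (p.2 : ℂ) ≠ 0 := Nat.cast_ne_zero.2 hp
  have hdiv (x : ℂ) : 1 + x * (p.2 : ℂ)⁻¹ = (x + p.2) / p.2 := by field_simp; ring
  simp only [Pi.div_apply, Function.comp_apply, hdiv, div_div_div_cancel_right₀ hp']

theorem tendsto_const_mul_sub_nhdsNE {c : ℂ} (hc : c ≠ 0) (x₀ : ℂ) :
    Tendsto (fun x ↦ c * (x - x₀)) (𝓝[≠] x₀) (𝓝[≠] 0) := by
  refine tendsto_nhdsWithin_iff.2 ⟨?_, ?_⟩
  · exact ((continuous_const.mul (continuous_sub_right x₀)).tendsto' x₀ 0 (by simp)).mono_left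
      nhdsWithin_le_nhds
  · filter_upwards [self_mem_nhdsWithin] with x hx
    exact mul_ne_zero hc (sub_ne_zero.2 hx)

namespace Complex

theorem add_intCast_ne_zero {w : ℂ} (h₀ : w ≠ 0) (h₁ : ‖w‖ < 1) (j : ℤ) : w + j ≠ 0 := by
  intro h
  rw [← eq_neg_iff_add_eq_zero] at h
  subst h
  rw [norm_neg, norm_intCast, ← Int.cast_abs, ← Int.cast_one, Int.cast_lt,
    Int.abs_lt_one_iff] at h₁
  simp [h₁] at h₀

theorem intCast_ne_neg_natCast {x : ℤ} (hx : 0 < x) (n : ℕ) : (x : ℂ) ≠ -n := by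
  exact_mod_cast (by omega : x ≠ -n)

theorem tendsto_mul_Gamma_neg_nat_add (n : ℕ) :
    Tendsto (fun w ↦ w * Gamma (-n + w)) (𝓝[≠] 0) (𝓝 ((-1) ^ n / n !)) := by
  induction n with
  | zero => simpa using tendsto_self_mul_Gamma_nhds_zero
  | succ n ih =>
    have hden : Tendsto (fun w : ℂ ↦ -(n + 1) + w) (𝓝[≠] 0) (𝓝 (-(n + 1))) :=
      ((continuous_const_add _).tendsto' 0 _ (add_zero _)).mono_left nhdsWithin_le_nhds
    have hn : -((n : ℂ) + 1) ≠ 0 := neg_ne_zero.2 n.cast_add_one_ne_zero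
    convert (ih.div hden hn).congr' ?_ using 2
    · push_cast [Nat.factorial_succ, pow_succ]
      field_simp
    · filter_upwards [nhdsWithin_le_nhds (eventually_ne_nhds n.cast_add_one_ne_zero.symm)]
        with w hw
      have hw' : -((n : ℂ) + 1) + w ≠ 0 := by
        rwa [neg_add_eq_sub, sub_ne_zero]
      have hG := Gamma_add_one _ hw'
      rw [show -((n : ℂ) + 1) + w + 1 = -n + w by ring] at hG
      simp only [Pi.div_apply, Nat.cast_add, Nat.cast_one]
      rw [hG]
      field_simp

theorem tendsto_Gamma_add {x : ℂ} (hx : ∀ n : ℕ, x ≠ -n) :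
    Tendsto (fun w ↦ Gamma (x + w)) (𝓝 0) (𝓝 (Gamma x)) :=
  (continuousAt_Gamma x hx).tendsto.comp ((continuous_const_add x).tendsto' 0 x (add_zero x))

theorem tendsto_inv_Gamma_add (x c : ℂ) :
    Tendsto (fun w ↦ (Gamma (x + c * w))⁻¹) (𝓝 0) (𝓝 (Gamma x)⁻¹) :=
  (differentiable_one_div_Gamma.continuous.comp
    (continuous_const.add (continuous_const_mul c))).tendsto' 0 _ (by simp)

theorem tendsto_mul_Gamma_add_mul_inv_Gamma {x y : ℤ} (hxy : x ≤ 0 → y ≤ 0) :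
    Tendsto (fun w ↦ w * Gamma (x + w) * (Gamma (y + 2 * w))⁻¹) (𝓝[≠] 0) (𝓝 0) := by
  have hinv : Tendsto _ (𝓝[≠] (0 : ℂ)) _ :=
    (tendsto_inv_Gamma_add y 2).mono_left nhdsWithin_le_nhds
  rcases le_or_gt x 0 with hx | hx
  · obtain ⟨n, rfl⟩ := Int.exists_eq_neg_ofNat hx
    obtain ⟨j, rfl⟩ := Int.exists_eq_neg_ofNat (hxy hx)
    simpa [Gamma_neg_nat_eq_zero] using (tendsto_mul_Gamma_neg_nat_add n).mul hinv
  · have hw : Tendsto (fun w : ℂ ↦ w) (𝓝[≠] 0) (𝓝 0) := nhdsWithin_le_nhds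
    have hG : Tendsto _ (𝓝[≠] (0 : ℂ)) _ :=
      (tendsto_Gamma_add (intCast_ne_neg_natCast hx)).mono_left nhdsWithin_le_nhds
    simpa using (hw.mul hG).mul hinv

end Complex

noncomputable def gaussTerm (a b c z : ℂ) (m : ℕ) : ℂ :=
  Gamma (a + m) * Gamma (b + m) / (Gamma (c + m) * m !) * z ^ m

theorem gaussTerm_succ {a b c : ℂ} (z : ℂ) {m : ℕ} (ha : a + m ≠ 0) (hb : b + m ≠ 0)
    (hc : ∀ n : ℕ, c + m ≠ -n) :
    gaussTerm a b c z (m + 1) =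
      gaussTerm a b c z m * ((a + m) * (b + m) / ((c + m) * (m + 1)) * z) := by
  have hc₀ : c + m ≠ 0 := by simpa using hc 0
  have hΓ := Gamma_ne_zero hc
  simp only [gaussTerm, Nat.cast_succ, Nat.factorial_succ, Nat.cast_mul, ← add_assoc,
    Gamma_add_one _ ha, Gamma_add_one _ hb, Gamma_add_one _ hc₀]
  field_simp
  ring

noncomputable def poleTerm (k s : ℕ) (z w : ℂ) (m : ℕ) : ℂ :=
  w * gaussTerm (w - (k + s)) (w - (k + s) + s) (2 * (w - (k + s))) z m

/-- Closed form of `2 r(k + s - m) r(k - m) / (r(2(k + s) - m) m!)`, where `r n = (-1)ⁿ / n!`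
is the residue of `Γ` at `-n`. -/
noncomputable def poleCoeff (k s m : ℕ) : ℂ :=
  if m ≤ k then
    2 * (-1) ^ (m + s) * ((2 * (k + s) - m)! : ℂ) / ((k + s - m)! * (k - m)! * m !)
  else 0

theorem poleCoeff_ne_zero {k m : ℕ} (s : ℕ) (hm : m ≤ k) : poleCoeff k s m ≠ 0 := by
  rw [poleCoeff, if_pos hm]
  simp [Nat.factorial_ne_zero]

theorem tendsto_poleTerm_of_le {k m : ℕ} (s : ℕ) (z : ℂ) (hm : m ≤ k) :
    Tendsto (fun w ↦ poleTerm k s z w m) (𝓝[≠] 0) (𝓝 (poleCoeff k s m * z ^ m)) := by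
  obtain ⟨n, rfl⟩ := Nat.exists_eq_add_of_le hm
  have h₁ := tendsto_mul_Gamma_neg_nat_add (n + s)
  have h₂ := tendsto_mul_Gamma_neg_nat_add n
  have h₃ := (tendsto_mul_Gamma_neg_nat_add (m + 2 * (n + s))).comp
    (by simpa using tendsto_const_mul_sub_nhdsNE two_ne_zero 0)
  have hr₃ : (-1 : ℂ) ^ (m + 2 * (n + s)) / (m + 2 * (n + s))! ≠ 0 := by
    simp [Nat.factorial_ne_zero]
  convert ((((h₁.mul h₂).mul (h₃.inv₀ hr₃)).const_mul 2).mul_const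
    ((m ! : ℂ)⁻¹ * z ^ m)).congr' ?_ using 2
  · rw [poleCoeff, if_pos hm, show 2 * (m + n + s) - m = m + 2 * (n + s) by omega,
      show m + n + s - m = n + s by omega, Nat.add_sub_cancel_left]
    have hsign : (-1 : ℂ) ^ (m + 2 * (n + s)) = (-1) ^ (m + s) * (-1) ^ (n + s) * (-1) ^ n := by
      rw [← pow_add, ← pow_add]; ring_nf
    rw [hsign]
    field_simp
    rw [← pow_mul, pow_mul', neg_one_sq, one_pow, one_mul]
  · filter_upwards [self_mem_nhdsWithin] with w hw
    have e₁ : w - ((m + n : ℕ) + s) + m = -((n + s : ℕ) : ℂ) + w := by push_cast; ring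
    have e₂ : w - ((m + n : ℕ) + s) + s + m = -(n : ℂ) + w := by push_cast; ring
    have e₃ : 2 * (w - ((m + n : ℕ) + s)) + m = -((m + 2 * (n + s) : ℕ) : ℂ) + 2 * w := by
      push_cast; ring
    simp only [poleTerm, gaussTerm, Function.comp_apply, e₁, e₂, e₃]
    have h2w : (2 : ℂ) * w ≠ 0 := mul_ne_zero two_ne_zero hw
    rw [mul_inv, div_eq_mul_inv, mul_inv]
    field_simp

theorem tendsto_poleTerm_of_lt {k m : ℕ} (s : ℕ) (z : ℂ) (hm : k < m) :
    Tendsto (fun w ↦ poleTerm k s z w m) (𝓝[≠] 0) (𝓝 (poleCoeff k s m * z ^ m)) := by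
  rw [poleCoeff, if_neg hm.not_ge, zero_mul]
  have hac := tendsto_mul_Gamma_add_mul_inv_Gamma (x := m - (k + s)) (y := m - 2 * (k + s))
    (by omega)
  have hb : Tendsto _ (𝓝[≠] (0 : ℂ)) _ :=
    (tendsto_Gamma_add (intCast_ne_neg_natCast (x := m - k) (by omega))).mono_left
      nhdsWithin_le_nhds
  convert (hac.mul hb).mul_const ((m ! : ℂ)⁻¹ * z ^ m) using 1
  · funext w
    have e₁ : w - (k + s) + m = (((m : ℤ) - (k + s) : ℤ) : ℂ) + w := by push_cast; ring
    have e₂ : w - (k + s) + s + m = (((m : ℤ) - k : ℤ) : ℂ) + w := by push_cast; ring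
    have e₃ : 2 * (w - (k + s)) + m = (((m : ℤ) - 2 * (k + s) : ℤ) : ℂ) + 2 * w := by
      push_cast; ring
    rw [poleTerm, gaussTerm, e₁, e₂, e₃]
    ring
  · simp

theorem tendsto_poleTerm (k s m : ℕ) (z : ℂ) :
    Tendsto (fun w ↦ poleTerm k s z w m) (𝓝[≠] 0) (𝓝 (poleCoeff k s m * z ^ m)) :=
  (le_or_gt m k).elim (tendsto_poleTerm_of_le s z) (tendsto_poleTerm_of_lt s z)

theorem eventually_norm_poleTerm_succ_le (k s : ℕ) {z : ℂ} (hz : ‖z‖ < 1) :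
    ∀ᶠ p in 𝓝[≠] 0 ×ˢ atTop,
      ‖poleTerm k s z p.1 (p.2 + 1)‖ ≤ (1 + ‖z‖) / 2 * ‖poleTerm k s z p.1 p.2‖ := by
  have hu : Tendsto (fun w : ℂ ↦ w - (k + s)) (𝓝[≠] 0) (𝓝 (0 - (k + s))) :=
    ((continuous_sub_right _).tendsto 0).mono_left nhdsWithin_le_nhds
  have hratio : Tendsto (fun p : ℂ × ℕ ↦ (p.1 - (k + s) + p.2) * (p.1 - (k + s) + s + p.2) /
      ((2 * (p.1 - (k + s)) + p.2) * (p.2 + 1)) * z) (𝓝[≠] 0 ×ˢ atTop) (𝓝 z) := by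
    have h₁ := tendsto_add_natCast_div_add_natCast hu (hu.const_mul 2)
    have h₂ := tendsto_add_natCast_div_add_natCast (hu.add_const (s : ℂ))
      (tendsto_const_nhds (x := (1 : ℂ)))
    refine (one_mul z ▸ mul_one (1 : ℂ) ▸ (h₁.mul h₂).mul_const z).congr fun p ↦ ?_
    rw [mul_div_mul_comm, add_comm (p.2 : ℂ) 1]
  have hsmall : ∀ᶠ w in 𝓝[≠] (0 : ℂ), w ≠ 0 ∧ ‖w‖ < 1 / 2 :=
    eventually_mem_nhdsWithin.and (nhdsWithin_le_nhds
      (tendsto_norm_zero.eventually (gt_mem_nhds (by norm_num))))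
  filter_upwards [tendsto_fst.eventually hsmall,
    hratio.norm.eventually_lt_const (by linarith : ‖z‖ < (1 + ‖z‖) / 2)]
    with ⟨w, m⟩ ⟨hw₀, hw₁⟩ hq
  have h2w : ‖2 * w‖ < 1 := by rw [norm_mul, Complex.norm_two]; linarith
  have ha : w - (k + s) + m ≠ 0 := fun h ↦
    add_intCast_ne_zero hw₀ (by linarith) (m - (k + s)) (by push_cast; linear_combination h)
  have hb : w - (k + s) + s + m ≠ 0 := fun h ↦
    add_intCast_ne_zero hw₀ (by linarith) (m - k) (by push_cast; linear_combination h)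
  have hc (n : ℕ) : 2 * (w - (k + s)) + m ≠ -n := fun h ↦
    add_intCast_ne_zero (mul_ne_zero two_ne_zero hw₀) h2w (m + n - 2 * (k + s))
      (by push_cast; linear_combination h)
  rw [poleTerm, poleTerm, gaussTerm_succ z ha hb hc, ← mul_assoc, norm_mul, mul_comm]
  gcongr

theorem tendsto_tsum_poleTerm (k s : ℕ) {z : ℂ} (hz : ‖z‖ < 1) :
    Tendsto (fun w ↦ ∑' m, poleTerm k s z w m) (𝓝[≠] 0)
      (𝓝 (∑ m ∈ Finset.range (k + 1), poleCoeff k s m * z ^ m)) := by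
  have hsum : ∑' m, poleCoeff k s m * z ^ m =
      ∑ m ∈ Finset.range (k + 1), poleCoeff k s m * z ^ m :=
    tsum_eq_sum fun m hm ↦ by
      rw [poleCoeff, if_neg (by simpa [Nat.lt_succ_iff] using hm), zero_mul]
  rw [← hsum]
  exact tendsto_tsum_of_norm_succ_le (by linarith) (tendsto_poleTerm k s · z)
    (eventually_norm_poleTerm_succ_le k s hz)

theorem I_mul_poleTerm {k s : ℕ} {lam₀ : ℂ} (hlam₀ : lam₀ = -I * (1 / 2 + k + s)) (z lam : ℂ)
    (m : ℕ) : I * poleTerm k s z (-I * (lam - lam₀)) m =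
      (lam - lam₀) * gaussTerm (1 / 2 - I * lam) (1 / 2 - I * lam + s) (1 - 2 * I * lam) z m := by
  have ha : -I * (lam - lam₀) - (k + s) = 1 / 2 - I * lam := by
    rw [hlam₀]; linear_combination (-(1 / 2 + k + s) : ℂ) * I_sq
  rw [poleTerm, ha, show 2 * (1 / 2 - I * lam) = 1 - 2 * I * lam by ring]
  linear_combination (-(lam - lam₀) *
    gaussTerm (1 / 2 - I * lam) (1 / 2 - I * lam + s) (1 - 2 * I * lam) z m) * I_sq

/-- Genuine simple pole for integer `s`: with `s, k ∈ ℕ`, `λ₀ = -i(1/2+k+s)`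
(so `a(λ₀) = -k-s`, `b(λ₀) = -k`, `c(λ₀) = -2k-2s` are all nonpositive
integers), for every `z` with `|z| < 1` the limit of
`(λ-λ₀) ∑_m Γ(a+m)Γ(b+m)/(Γ(c+m)m!) zᵐ` as `λ → λ₀` exists, and as a function
of `z` it is a polynomial of degree at most `k` with nonzero value at `z = 0`.
Hence `Φ` has a non-removable simple pole at `λ₀`. -/
theorem resonance_integer_s (s k : ℕ) (lam₀ : ℂ)
    (hlam₀ : lam₀ = -Complex.I * (1 / 2 + (k : ℂ) + (s : ℂ))) :
    ∃ P : Polynomial ℂ, P.natDegree ≤ k ∧ P.eval 0 ≠ 0 ∧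
      ∀ z : ℂ, ‖z‖ < 1 →
        Tendsto (fun lam : ℂ => (lam - lam₀) *
            ∑' m : ℕ,
              Complex.Gamma ((1 / 2 - Complex.I * lam) + (m : ℂ))
                * Complex.Gamma ((1 / 2 - Complex.I * lam + (s : ℂ)) + (m : ℂ))
                / (Complex.Gamma ((1 - 2 * Complex.I * lam) + (m : ℂ))
                    * (Nat.factorial m : ℂ)) * z ^ m)
          (nhdsWithin lam₀ {lam₀}ᶜ) (nhds (P.eval z)) := by
  open Polynomial in
  refine ⟨∑ m ∈ Finset.range (k + 1), C (I * poleCoeff k s m) * X ^ m, ?_, ?_, fun z hz ↦ ?_⟩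
  · exact natDegree_sum_le_of_forall_le _ _ fun m hm ↦
      (natDegree_C_mul_X_pow_le _ _).trans (by simpa [Nat.lt_succ_iff] using hm)
  · simpa [eval_finsetSum, zero_pow_eq] using
      mul_ne_zero I_ne_zero (poleCoeff_ne_zero s k.zero_le)
  · have hw := tendsto_const_mul_sub_nhdsNE (neg_ne_zero.2 I_ne_zero) lam₀
    convert ((tendsto_tsum_poleTerm k s hz).comp hw).const_mul I using 1
    · funext lam
      rw [Function.comp_apply, ← tsum_mul_left, ← tsum_mul_left]
      exact tsum_congr fun m ↦ (I_mul_poleTerm hlam₀ z lam m).symm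
    · simp [eval_finsetSum, Finset.mul_sum, mul_assoc]
end

section
/- Let n ≥ 1 be a natural number, and let (μ_j)_{j∈ℕ} be a nondecreasing sequence of nonnegative real numbers tending to infinity for which there exist constants C > 0 and C' ≥ 0 such that |#{j ∈ ℕ : μ_j ≤ t} - C·tⁿ| ≤ C'·t^{n-1} for all t ≥ 1 (the Weyl law on the compact cross-section, with C = |Bⁿ|·Vol(Y,h)/(2π)ⁿ). Set s_j = √(((n-1)/2)² + μ_j²). Then there exists a constant C'' ≥ 0 such that for all λ ≥ 1: | #{(j,k) ∈ ℕ × ℕ : 1/2 + k + s_j ≤ λ} - (C/(n+1))·λ^{n+1} | ≤ C''·λⁿ. (Consequently, if s_j ∉ 1/2 + ℤ for all j, the resonances λ_{j,k} = -i(1/2 + k + s_j) of the hyperbolic cone obey the Weyl law #{|λ_{j,k}| ≤ λ} = (|Bⁿ|·Vol(Y,h)/((2π)ⁿ(n+1)))·λ^{n+1} + O(λⁿ).) -/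
/-!
Since `μ_j ≤ s_j ≤ μ_j + (n - 1)/2`, the counting function `N(t) = #{j : s_j ≤ t}` is squeezed
between the counting function of `μ` at `t - (n - 1)/2` and at `t`, so it still satisfies
`N(t) = C tⁿ + O((t + 1)ⁿ⁻¹)` uniformly for `t ≥ 0`. Counting the pairs `(j, k)` fibre by fibre
in `k` gives `∑_{k ≤ x} N(x - k)` with `x = λ - 1/2`. Replacing `N(t)` by `C tⁿ` costs
`O((x + 1)ⁿ)` over the `⌊x⌋ + 1` terms, and `∑_{k ≤ x} (x - k)ⁿ = x^{n+1}/(n + 1) + O((x + 1)ⁿ)`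
by telescoping `(n + 1) cⁿ ≤ (c + 1)^{n+1} - c^{n+1} ≤ (n + 1) (c + 1)ⁿ`.
-/

open Filter Finset

section PowerDifferences

variable {R : Type*} [CommRing R] [LinearOrder R] [IsStrictOrderedRing R] {b c : R}

theorem pow_succ_sub_pow_succ_le (hc : 0 ≤ c) (hcb : c ≤ b) (d : ℕ) :
    b ^ (d + 1) - c ^ (d + 1) ≤ (d + 1) * b ^ d * (b - c) := by
  have hb : 0 ≤ b := hc.trans hcb
  have hbc : 0 ≤ b - c := sub_nonneg.mpr hcb
  have hself := geom_sum₂_self b (d + 1)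
  push_cast at hself
  rw [← geom_sum₂_mul, Nat.add_sub_cancel, ← hself]
  gcongr

theorem le_pow_succ_sub_pow_succ (hc : 0 ≤ c) (hcb : c ≤ b) (d : ℕ) :
    (d + 1) * c ^ d * (b - c) ≤ b ^ (d + 1) - c ^ (d + 1) := by
  have hbc : 0 ≤ b - c := sub_nonneg.mpr hcb
  have hself := geom_sum₂_self c (d + 1)
  push_cast at hself
  rw [← geom_sum₂_mul, Nat.add_sub_cancel, ← hself]
  gcongr

end PowerDifferences

theorem natCast_le_of_mem_range_floor_add_one {R : Type*} [Semiring R] [LinearOrder R]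
    [FloorSemiring R] {x : R} (hx : 0 ≤ x) {k : ℕ} (hk : k ∈ range (⌊x⌋₊ + 1)) : (k : R) ≤ x :=
  (Nat.le_floor_iff hx).mp (Nat.lt_succ_iff.mp (mem_range.mp hk))

section SumsOfPowers

variable {K : Type*} [Field K] [LinearOrder K] [IsStrictOrderedRing K] [FloorSemiring K] {x : K}

theorem mul_sum_range_floor_sub_pow_le (hx : 0 ≤ x) (d : ℕ) :
    (d + 1) * ∑ k ∈ range (⌊x⌋₊ + 1), (x - k) ^ d ≤ (x + 1) ^ (d + 1) := by
  have hstep : ∀ k ∈ range (⌊x⌋₊ + 1),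
      (d + 1) * (x - k) ^ d ≤ (x + 1 - k) ^ (d + 1) - (x + 1 - (k + 1 : ℕ)) ^ (d + 1) := by
    intro k hk
    have hkx := natCast_le_of_mem_range_floor_add_one hx hk
    have h := le_pow_succ_sub_pow_succ (sub_nonneg.mpr hkx) (by linarith : x - k ≤ x + 1 - k) d
    rw [show x + 1 - k - (x - k) = 1 by ring, mul_one] at h
    rwa [show x + 1 - ((k + 1 : ℕ) : K) = x - k by push_cast; ring]
  calc (d + 1) * ∑ k ∈ range (⌊x⌋₊ + 1), (x - k) ^ d
      ≤ ∑ k ∈ range (⌊x⌋₊ + 1), ((x + 1 - k) ^ (d + 1) - (x + 1 - (k + 1 : ℕ)) ^ (d + 1)) := by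
        rw [mul_sum]; exact sum_le_sum hstep
    _ = (x + 1) ^ (d + 1) - (x - ⌊x⌋₊) ^ (d + 1) := by
        rw [sum_range_sub' (fun k : ℕ => (x + 1 - k) ^ (d + 1))]; push_cast; ring_nf
    _ ≤ (x + 1) ^ (d + 1) := sub_le_self _ (pow_nonneg (sub_nonneg.mpr (Nat.floor_le hx)) _)

theorem pow_succ_le_mul_sum_range_floor_sub_pow_add_one (hx : 0 ≤ x) (d : ℕ) :
    x ^ (d + 1) ≤ (d + 1) * ∑ k ∈ range (⌊x⌋₊ + 1), (x - k) ^ d + 1 := by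
  have hstep : ∀ k ∈ range ⌊x⌋₊,
      (x - k) ^ (d + 1) - (x - (k + 1 : ℕ)) ^ (d + 1) ≤ (d + 1) * (x - k) ^ d := by
    intro k hk
    have hkx : ((k + 1 : ℕ) : K) ≤ x := (Nat.cast_le.mpr (mem_range.mp hk)).trans (Nat.floor_le hx)
    push_cast at hkx ⊢
    have h := pow_succ_sub_pow_succ_le (by linarith : 0 ≤ x - (k + 1)) (by linarith : _ ≤ x - k) d
    rwa [show x - k - (x - (k + 1)) = 1 by ring, mul_one] at h
  have hfrac : (x - ⌊x⌋₊) ^ (d + 1) ≤ 1 :=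
    pow_le_one₀ (sub_nonneg.mpr (Nat.floor_le hx)) (by linarith [Nat.lt_floor_add_one x])
  calc x ^ (d + 1) = ∑ k ∈ range ⌊x⌋₊, ((x - k) ^ (d + 1) - (x - (k + 1 : ℕ)) ^ (d + 1))
        + (x - ⌊x⌋₊) ^ (d + 1) := by
        rw [sum_range_sub' (fun k : ℕ => (x - k) ^ (d + 1))]; simp
    _ ≤ (d + 1) * ∑ k ∈ range ⌊x⌋₊, (x - k) ^ d + 1 := by
        rw [mul_sum]; exact add_le_add (sum_le_sum hstep) hfrac
    _ ≤ (d + 1) * ∑ k ∈ range (⌊x⌋₊ + 1), (x - k) ^ d + 1 := by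
        rw [sum_range_succ]
        gcongr
        exact le_add_of_nonneg_right (pow_nonneg (sub_nonneg.mpr (Nat.floor_le hx)) _)

theorem abs_mul_sum_range_floor_sub_pow_sub_le (hx : 0 ≤ x) (d : ℕ) :
    |(d + 1) * ∑ k ∈ range (⌊x⌋₊ + 1), (x - k) ^ d - x ^ (d + 1)| ≤ (d + 1) * (x + 1) ^ d := by
  have hgap := pow_succ_sub_pow_succ_le hx (by linarith : x ≤ x + 1) d
  have hone : (1 : K) ≤ (d + 1) * (x + 1) ^ d :=
    one_le_mul_of_one_le_of_one_le (by simp) (one_le_pow₀ (by linarith))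
  rw [abs_le]
  constructor
  · linarith [pow_succ_le_mul_sum_range_floor_sub_pow_add_one hx d]
  · linarith [mul_sum_range_floor_sub_pow_le hx d]

end SumsOfPowers

/-- `ncard` is `0` on infinite sets, so the lemmas below assume finite sublevel sets. -/
noncomputable def countingFunction (f : ℕ → ℝ) (t : ℝ) : ℝ := ({j | f j ≤ t}.ncard : ℝ)

theorem countingFunction_le {f g : ℕ → ℝ} {t u : ℝ} (hfin : {j | g j ≤ u}.Finite)
    (h : ∀ j, f j ≤ t → g j ≤ u) : countingFunction f t ≤ countingFunction g u :=
  Nat.cast_le.mpr (Set.ncard_le_ncard (fun j => h j) hfin)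

theorem countingFunction_nonneg (f : ℕ → ℝ) (t : ℝ) : 0 ≤ countingFunction f t :=
  Nat.cast_nonneg _

/-- The weight `(t + 1) ^ d` instead of `t ^ d` makes the bound uniform down to `t = 0`. -/
def WeylBound (F : ℝ → ℝ) (C E : ℝ) (d : ℕ) : Prop :=
  ∀ t, 0 ≤ t → |F t - C * t ^ (d + 1)| ≤ E * (t + 1) ^ d

namespace WeylBound

variable {F : ℝ → ℝ} {C E : ℝ} {d : ℕ}

theorem nonneg (hF : WeylBound F C E d) : 0 ≤ E := by
  simpa using (abs_nonneg _).trans (hF 0 le_rfl)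

theorem countingFunction_of_one_le {μ : ℕ → ℝ} {C' : ℝ} (hC : 0 ≤ C) (hC' : 0 ≤ C')
    (hfin : ∀ t, {j | μ j ≤ t}.Finite)
    (hweyl : ∀ t : ℝ, 1 ≤ t → |countingFunction μ t - C * t ^ (d + 1)| ≤ C' * t ^ d) :
    WeylBound (countingFunction μ) C (C' + countingFunction μ 1 + C) d := by
  intro t ht
  have hN1 := countingFunction_nonneg μ 1
  rcases le_total 1 t with h1 | h1
  · calc |countingFunction μ t - C * t ^ (d + 1)| ≤ C' * t ^ d := hweyl t h1
      _ ≤ C' * (t + 1) ^ d := by gcongr; linarith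
      _ ≤ (C' + countingFunction μ 1 + C) * (t + 1) ^ d := by
        gcongr; linarith
  · have hN : countingFunction μ t ≤ countingFunction μ 1 :=
      countingFunction_le (hfin 1) fun j hj => hj.trans h1
    have hCt : C * t ^ (d + 1) ≤ C := mul_le_of_le_one_right hC (pow_le_one₀ ht h1)
    have hCt0 : 0 ≤ C * t ^ (d + 1) := by positivity
    calc |countingFunction μ t - C * t ^ (d + 1)| ≤ countingFunction μ 1 + C := by
          rw [abs_le]; constructor <;> linarith [countingFunction_nonneg μ t]
      _ ≤ (C' + countingFunction μ 1 + C) * 1 := by linarith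
      _ ≤ (C' + countingFunction μ 1 + C) * (t + 1) ^ d :=
          mul_le_mul_of_nonneg_left (one_le_pow₀ (by linarith)) (by linarith)

theorem countingFunction_of_le_of_le_add {μ s : ℕ → ℝ} {a : ℝ}
    (hF : WeylBound (countingFunction μ) C E d) (hC : 0 ≤ C) (ha : 0 ≤ a)
    (hfin : ∀ t, {j | μ j ≤ t}.Finite) (hμs : ∀ j, μ j ≤ s j) (hsμ : ∀ j, s j ≤ μ j + a) :
    WeylBound (countingFunction s) C (E + C * (d + 1) * a) d := by
  intro t ht
  have hE := hF.nonneg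
  have htd : t ^ d ≤ (t + 1) ^ d := by gcongr; linarith
  have hEpow : 0 ≤ E * (t + 1) ^ d := by positivity
  have hCpow : 0 ≤ C * (d + 1) * a * (t + 1) ^ d := by positivity
  have hupper : countingFunction s t ≤ countingFunction μ t :=
    countingFunction_le (hfin t) fun j hj => (hμs j).trans hj
  have hlower : C * t ^ (d + 1) - (E + C * (d + 1) * a) * (t + 1) ^ d ≤ countingFunction s t := by
    rcases le_total a t with hat | hta
    · have hshift : countingFunction μ (t - a) ≤ countingFunction s t :=
        countingFunction_le ((hfin t).subset fun j hj => (hμs j).trans hj)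
          fun j hj => by linarith [hsμ j]
      have hgap : t ^ (d + 1) - (t - a) ^ (d + 1) ≤ (d + 1) * t ^ d * a := by
        simpa using pow_succ_sub_pow_succ_le (sub_nonneg.mpr hat) (sub_le_self t ha) d
      have hweyl := (abs_le.mp (hF (t - a) (sub_nonneg.mpr hat))).1
      have hshift_pow : (t - a + 1) ^ d ≤ (t + 1) ^ d := by gcongr; linarith
      linarith [mul_le_mul_of_nonneg_left hgap hC, mul_le_mul_of_nonneg_left hshift_pow hE,
        mul_le_mul_of_nonneg_left htd (by positivity : 0 ≤ C * (d + 1) * a)]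
    · have hsmall : t ^ (d + 1) ≤ (d + 1) * a * (t + 1) ^ d := by
        calc t ^ (d + 1) = t ^ d * t := pow_succ t d
          _ ≤ (t + 1) ^ d * ((d + 1) * a) := by
            gcongr
            nlinarith
          _ = (d + 1) * a * (t + 1) ^ d := by ring
      linarith [mul_le_mul_of_nonneg_left hsmall hC, countingFunction_nonneg s t]
  have hweyl := (abs_le.mp (hF t ht)).2
  rw [abs_le]
  constructor <;> linarith

theorem abs_sum_range_floor_sub_le (hF : WeylBound F C E d) (hC : 0 ≤ C) {x : ℝ} (hx : 0 ≤ x) :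
    |∑ k ∈ range (⌊x⌋₊ + 1), F (x - k) - C / (d + 2) * x ^ (d + 2)|
      ≤ (E + C) * (x + 1) ^ (d + 1) := by
  have hE := hF.nonneg
  have hremainder : |∑ k ∈ range (⌊x⌋₊ + 1), (F (x - k) - C * (x - k) ^ (d + 1))|
      ≤ E * (x + 1) ^ (d + 1) := by
    have hterm : ∀ k ∈ range (⌊x⌋₊ + 1), |F (x - k) - C * (x - k) ^ (d + 1)| ≤ E * (x + 1) ^ d := by
      intro k hk
      have hkx := natCast_le_of_mem_range_floor_add_one hx hk
      calc |F (x - k) - C * (x - k) ^ (d + 1)| ≤ E * (x - k + 1) ^ d := hF _ (sub_nonneg.mpr hkx)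
        _ ≤ E * (x + 1) ^ d := by gcongr; linarith [(Nat.cast_nonneg k : (0 : ℝ) ≤ k)]
    calc |∑ k ∈ range (⌊x⌋₊ + 1), (F (x - k) - C * (x - k) ^ (d + 1))|
        ≤ ∑ k ∈ range (⌊x⌋₊ + 1), |F (x - k) - C * (x - k) ^ (d + 1)| := abs_sum_le_sum_abs _ _
      _ ≤ (⌊x⌋₊ + 1) * (E * (x + 1) ^ d) := by
        simpa using sum_le_card_nsmul _ _ _ hterm
      _ ≤ (x + 1) * (E * (x + 1) ^ d) := by gcongr; exact Nat.floor_le hx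
      _ = E * (x + 1) ^ (d + 1) := by ring
  have hmain : |C * ∑ k ∈ range (⌊x⌋₊ + 1), (x - k) ^ (d + 1) - C / (d + 2) * x ^ (d + 2)|
      ≤ C * (x + 1) ^ (d + 1) := by
    have h := abs_mul_sum_range_floor_sub_pow_sub_le hx (d + 1)
    push_cast at h
    rw [show (d : ℝ) + 1 + 1 = d + 2 by ring] at h
    have hd : (0 : ℝ) < d + 2 := by positivity
    calc |C * ∑ k ∈ range (⌊x⌋₊ + 1), (x - k) ^ (d + 1) - C / (d + 2) * x ^ (d + 2)|
        = |C / (d + 2) * ((d + 2) * ∑ k ∈ range (⌊x⌋₊ + 1), (x - k) ^ (d + 1) - x ^ (d + 2))| := by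
          congr 1; field_simp
      _ = C / (d + 2) * |(d + 2) * ∑ k ∈ range (⌊x⌋₊ + 1), (x - k) ^ (d + 1) - x ^ (d + 2)| := by
          rw [abs_mul, abs_of_nonneg (div_nonneg hC hd.le)]
      _ ≤ C / (d + 2) * ((d + 2) * (x + 1) ^ (d + 1)) := by gcongr
      _ = C * (x + 1) ^ (d + 1) := by field_simp
  calc |∑ k ∈ range (⌊x⌋₊ + 1), F (x - k) - C / (d + 2) * x ^ (d + 2)|
      = |∑ k ∈ range (⌊x⌋₊ + 1), (F (x - k) - C * (x - k) ^ (d + 1))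
          + (C * ∑ k ∈ range (⌊x⌋₊ + 1), (x - k) ^ (d + 1) - C / (d + 2) * x ^ (d + 2))| := by
        rw [sum_sub_distrib, mul_sum]; ring_nf
    _ ≤ E * (x + 1) ^ (d + 1) + C * (x + 1) ^ (d + 1) :=
        (abs_add_le _ _).trans (add_le_add hremainder hmain)
    _ = (E + C) * (x + 1) ^ (d + 1) := by ring

end WeylBound

theorem ncard_add_le_eq_sum_range_floor {f : ℕ → ℝ} (hf : ∀ j, 0 ≤ f j)
    (hfin : ∀ t, {j | f j ≤ t}.Finite) (x : ℝ) :
    ({p : ℕ × ℕ | (p.2 : ℝ) + f p.1 ≤ x}.ncard : ℝ)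
      = ∑ k ∈ range (⌊x⌋₊ + 1), countingFunction f (x - k) := by
  classical
  have hle_floor : ∀ p : ℕ × ℕ, (p.2 : ℝ) + f p.1 ≤ x → p.2 ≤ ⌊x⌋₊ :=
    fun p hp => Nat.le_floor (by linarith [hf p.1])
  have hS : {p : ℕ × ℕ | (p.2 : ℝ) + f p.1 ≤ x}.Finite :=
    ((hfin x).prod (Set.finite_Iic ⌊x⌋₊)).subset fun p hp =>
      ⟨show f p.1 ≤ x by linarith [(Nat.cast_nonneg p.2 : (0 : ℝ) ≤ p.2), hp.out], hle_floor p hp⟩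
  rw [Set.ncard_eq_toFinset_card _ hS, card_eq_sum_card_fiberwise (f := Prod.snd)
    (t := range (⌊x⌋₊ + 1)) fun p hp => by
      simpa [Nat.lt_succ_iff] using hle_floor p (by simpa using hp)]
  push_cast
  refine sum_congr rfl fun k _ => ?_
  rw [countingFunction, Set.ncard_eq_toFinset_card _ (hfin _), Nat.cast_inj]
  refine card_nbij' Prod.fst (fun j => (j, k)) ?_ ?_ ?_ fun _ _ => rfl
  · intro p hp
    simp only [coe_filter, Set.Finite.mem_toFinset, Set.Finite.coe_toFinset, Set.mem_ofPred_eq]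
      at hp ⊢
    obtain ⟨hp, rfl⟩ := hp
    linarith
  · intro j hj
    simp only [coe_filter, Set.Finite.mem_toFinset, Set.Finite.coe_toFinset, Set.mem_ofPred_eq]
      at hj ⊢
    exact ⟨by linarith, trivial⟩
  · intro p hp
    simp only [coe_filter, Set.Finite.mem_toFinset, Set.mem_ofPred_eq] at hp
    rw [← hp.2]

theorem abs_ncard_resonances_sub_le {s : ℕ → ℝ} {C E : ℝ} {d : ℕ} (hs : ∀ j, 0 ≤ s j)
    (hfin : ∀ t, {j | s j ≤ t}.Finite) (hN : WeylBound (countingFunction s) C E d) (hC : 0 ≤ C)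
    {lam : ℝ} (hlam : 1 ≤ lam) :
    |({p : ℕ × ℕ | 1 / 2 + (p.2 : ℝ) + s p.1 ≤ lam}.ncard : ℝ) - C / (d + 2) * lam ^ (d + 2)|
      ≤ ((E + C) * 2 ^ (d + 1) + C) * lam ^ (d + 1) := by
  set x := lam - 1 / 2 with hx
  have hset : {p : ℕ × ℕ | 1 / 2 + (p.2 : ℝ) + s p.1 ≤ lam} = {p | (p.2 : ℝ) + s p.1 ≤ x} := by
    ext p
    simp only [Set.mem_ofPred_eq, hx]
    constructor <;> intro h <;> linarith
  rw [hset, ncard_add_le_eq_sum_range_floor hs hfin]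
  have hsum := hN.abs_sum_range_floor_sub_le hC (by linarith : 0 ≤ x)
  have hshift : |C / (d + 2) * x ^ (d + 2) - C / (d + 2) * lam ^ (d + 2)| ≤ C * lam ^ (d + 1) := by
    have hgap := pow_succ_sub_pow_succ_le (by linarith : 0 ≤ x) (by linarith : x ≤ lam) (d + 1)
    have hxl : x ^ (d + 2) ≤ lam ^ (d + 2) := by gcongr <;> linarith
    push_cast at hgap
    rw [← mul_sub, abs_mul, abs_of_nonneg (by positivity), abs_sub_comm,
      abs_of_nonneg (by linarith)]
    calc C / (d + 2) * (lam ^ (d + 2) - x ^ (d + 2))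
        ≤ C / (d + 2) * ((d + 1 + 1) * lam ^ (d + 1) * (lam - x)) := by gcongr
      _ = C / 2 * lam ^ (d + 1) := by rw [hx]; field_simp; ring
      _ ≤ C * lam ^ (d + 1) := by gcongr; linarith
  have hx1 : (x + 1) ^ (d + 1) ≤ 2 ^ (d + 1) * lam ^ (d + 1) := by
    rw [← mul_pow]; gcongr <;> linarith
  have hE := hN.nonneg
  calc _ ≤ (E + C) * (x + 1) ^ (d + 1) + C * lam ^ (d + 1) :=
        (abs_sub_le _ (C / (d + 2) * x ^ (d + 2)) _).trans (add_le_add hsum hshift)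
    _ ≤ (E + C) * (2 ^ (d + 1) * lam ^ (d + 1)) + C * lam ^ (d + 1) := by gcongr
    _ = ((E + C) * 2 ^ (d + 1) + C) * lam ^ (d + 1) := by ring

theorem resonance_weyl_law_general (n : ℕ) (hn : 1 ≤ n) (μ : ℕ → ℝ)
    (hnonneg : ∀ j, 0 ≤ μ j)
    (htop : Tendsto μ atTop atTop)
    (C C' : ℝ) (hC : 0 < C) (hC' : 0 ≤ C')
    (hweyl : ∀ t : ℝ, 1 ≤ t →
      |(({j : ℕ | μ j ≤ t}.ncard : ℝ)) - C * t ^ n| ≤ C' * t ^ (n - 1))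
    (s : ℕ → ℝ)
    (hsdef : ∀ j, s j = Real.sqrt ((((n : ℝ) - 1) / 2) ^ 2 + μ j ^ 2)) :
    ∃ C'' : ℝ, 0 ≤ C'' ∧ ∀ lam : ℝ, 1 ≤ lam →
      |(({p : ℕ × ℕ | 1 / 2 + (p.2 : ℝ) + s p.1 ≤ lam}.ncard : ℝ))
          - C / ((n : ℝ) + 1) * lam ^ (n + 1)| ≤ C'' * lam ^ n := by
  obtain ⟨d, rfl⟩ : ∃ d, n = d + 1 := ⟨n - 1, by omega⟩
  set a : ℝ := (((d + 1 : ℕ) : ℝ) - 1) / 2 with ha_def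
  have ha : 0 ≤ a := by rw [ha_def]; push_cast; linarith [(Nat.cast_nonneg d : (0 : ℝ) ≤ d)]
  have hfin : ∀ t, {j | μ j ≤ t}.Finite := fun t => by
    have h := htop.eventually_gt_atTop t
    rw [← Nat.cofinite_eq_atTop, eventually_cofinite] at h
    simpa only [not_lt] using h
  have hμs : ∀ j, μ j ≤ s j := fun j =>
    hsdef j ▸ (le_abs_self _).trans (Real.abs_le_sqrt (le_add_of_nonneg_left (sq_nonneg _)))
  have hsμ : ∀ j, s j ≤ μ j + a := fun j =>
    hsdef j ▸ Real.sqrt_le_iff.mpr ⟨by linarith [hnonneg j], by nlinarith [hnonneg j]⟩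
  have hWμ := WeylBound.countingFunction_of_one_le hC.le hC' hfin hweyl
  have hWs := hWμ.countingFunction_of_le_of_le_add hC.le ha hfin hμs hsμ
  have hs : ∀ j, 0 ≤ s j := fun j => hsdef j ▸ Real.sqrt_nonneg _
  have hsfin : ∀ t, {j | s j ≤ t}.Finite := fun t => (hfin t).subset fun j hj => (hμs j).trans hj
  refine ⟨_, add_nonneg (mul_nonneg (add_nonneg hWs.nonneg hC.le) (pow_nonneg zero_le_two (d + 1)))
    hC.le, fun lam hlam => ?_⟩
  rw [show ((d + 1 : ℕ) : ℝ) + 1 = d + 2 by push_cast; ring]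
  exact abs_ncard_resonances_sub_le hs hsfin hWs hC.le hlam

/-- Weyl law for resonances of a hyperbolic cone: if the eigenvalue counting
function of the cross-section satisfies `#{j : μ_j ≤ t} = C tⁿ + O(t^{n-1})`
(with explicit constants), then with `s_j = √(((n-1)/2)² + μ_j²)` the resonance
counting function satisfies
`#{(j,k) : 1/2 + k + s_j ≤ λ} = (C/(n+1)) λ^{n+1} + O(λⁿ)`. -/
theorem resonance_weyl_law (n : ℕ) (hn : 1 ≤ n) (μ : ℕ → ℝ)
    (hmono : Monotone μ) (hnonneg : ∀ j, 0 ≤ μ j)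
    (htop : Tendsto μ atTop atTop)
    (C C' : ℝ) (hC : 0 < C) (hC' : 0 ≤ C')
    (hweyl : ∀ t : ℝ, 1 ≤ t →
      |(({j : ℕ | μ j ≤ t}.ncard : ℝ)) - C * t ^ n| ≤ C' * t ^ (n - 1))
    (s : ℕ → ℝ)
    (hsdef : ∀ j, s j = Real.sqrt ((((n : ℝ) - 1) / 2) ^ 2 + μ j ^ 2)) :
    ∃ C'' : ℝ, 0 ≤ C'' ∧ ∀ lam : ℝ, 1 ≤ lam →
      |(({p : ℕ × ℕ | 1 / 2 + (p.2 : ℝ) + s p.1 ≤ lam}.ncard : ℝ))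
          - C / ((n : ℝ) + 1) * lam ^ (n + 1)| ≤ C'' * lam ^ n :=
  resonance_weyl_law_general n hn μ hnonneg htop C C' hC hC' hweyl s hsdef
end

section
/- Let n ≥ 1 and j ≥ 1 be natural numbers, let α > 0 be a transcendental real number, and let m ∈ ℕ. Then √(((n-1)/2)² + j(j+n-1)/α²) ≠ m + 1/2. (Hence, for α transcendental, the rescaled round metric α²h₀ on Sⁿ — whose Laplace eigenvalues are j(j+n-1)/α² — satisfies the genericity condition √(((n-1)/2)² + μ_j²) ∉ 1/2 + ℤ for every eigenvalue with j ≥ 1, so the corresponding hyperbolic cone has resonances; in particular resonances can exist in any dimension.) -/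
/-! Since `α` is transcendental, so is `α²`; hence `((n-1)/2)² + j(j+n-1)/α²` is irrational as soon
as the rational coefficient `j(j+n-1)` is nonzero, and a square root equal to the positive rational
`m + 1/2` would force it to be the rational `(m + 1/2)²`. -/

theorem Transcendental.irrational_ratCast_add_ratCast_div_sq {α : ℝ} (hα : Transcendental ℚ α)
    (a : ℚ) {b : ℚ} (hb : b ≠ 0) : Irrational (a + b / α ^ 2) :=
  ((hα.pow two_pos).irrational.ratCast_div hb).ratCast_add a

theorem Irrational.sqrt_ne_ratCast {x : ℝ} (hx : Irrational x) {q : ℚ} (hq : 0 < q) :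
    √x ≠ q := by
  intro h
  rw [Real.sqrt_eq_iff_mul_self_eq_of_pos (by exact_mod_cast hq)] at h
  exact hx ⟨q * q, by rw [Rat.cast_mul, h]⟩

theorem transcendental_rescaling_generic_general (n j : ℕ) (hn : 1 ≤ n) (hj : 1 ≤ j)
    (α : ℝ) (htr : Transcendental ℚ α) (m : ℕ) :
    Real.sqrt ((((n : ℝ) - 1) / 2) ^ 2 + (j : ℝ) * ((j : ℝ) + (n : ℝ) - 1) / α ^ 2)
      ≠ (m : ℝ) + 1 / 2 := by
  have hn' : (1 : ℚ) ≤ n := by exact_mod_cast hn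
  have hj' : (1 : ℚ) ≤ j := by exact_mod_cast hj
  have heigen : (j : ℚ) * (j + n - 1) ≠ 0 := (mul_pos (by linarith) (by linarith)).ne'
  have hirr := htr.irrational_ratCast_add_ratCast_div_sq ((((n : ℚ) - 1) / 2) ^ 2) heigen
  have hhalf : (0 : ℚ) < m + 1 / 2 := by positivity
  push_cast at hirr
  simpa using hirr.sqrt_ne_ratCast hhalf

/-- For a transcendental `α > 0`, the rescaled round metric `α²h₀` on `Sⁿ`,
with Laplace eigenvalues `j(j+n-1)/α²`, satisfies the genericity condition:
`√(((n-1)/2)² + j(j+n-1)/α²)` is never of the form `m + 1/2` with `m ∈ ℕ`,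
for any `j ≥ 1`. -/
theorem transcendental_rescaling_generic (n j : ℕ) (hn : 1 ≤ n) (hj : 1 ≤ j)
    (α : ℝ) (hα : 0 < α) (htr : Transcendental ℚ α) (m : ℕ) :
    Real.sqrt ((((n : ℝ) - 1) / 2) ^ 2 + (j : ℝ) * ((j : ℝ) + (n : ℝ) - 1) / α ^ 2)
      ≠ (m : ℝ) + 1 / 2 :=
  transcendental_rescaling_generic_general n j hn hj α htr m
end
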